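/- arXiv:math/0604088 — 3 statements merged into one kernel-verified Lean document; each statement's English description precedes it below -/
import Mathlib

section
/- Let G be a finite simple (loopless) graph, let v be a non-isolated vertex of G, and let G''' be the graph obtained from G by adding a true twin w of v. Then q(G''';x,y) = 2·q(G;x,y) + ((x−1)² − 1)·q(G − v; x, y), where G − v denotes the induced subgraph of G on V ∖ {v}. -/
open Polynomial

universe u

variable {V : Type u}

/-- The `F_2`-rank of the adjacency matrix of the subgraph of `G` induced by `S`. -/
noncomputable def rankIn [Fintype V] (G : SimpleGraph V) (S : Finset V) : ℕ :=
  letI := Classical.decRel G.Adj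
  ((SimpleGraph.adjMatrix (ZMod 2) G).submatrix
    (fun i : S => (i : V)) (fun i : S => (i : V))).rank

/-- The vertex-nullity interlace polynomial `q_N(G;x) = Σ_{S ⊆ V} (x-1)^{n(G[S])}`. -/
noncomputable def qNull [Fintype V] (G : SimpleGraph V) : Polynomial ℤ :=
  ∑ S : Finset V, ((X : Polynomial ℤ) - 1) ^ (S.card - rankIn G S)

/-- The γ invariant: the coefficient of `x^1` in `q_N(G;x)`. -/
noncomputable def gammaInv [Fintype V] (G : SimpleGraph V) : ℤ :=
  (qNull G).coeff 1

/-- The two-variable interlace polynomial, with `x = X 0`, `y = X 1`. -/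
noncomputable def interlaceQ [Fintype V] (G : SimpleGraph V) : MvPolynomial (Fin 2) ℤ :=
  ∑ S : Finset V,
    (MvPolynomial.X 0 - 1) ^ (rankIn G S) * (MvPolynomial.X 1 - 1) ^ (S.card - rankIn G S)

/-- `x` is adjacent to `v` but not to `w` (and differs from both). -/
def adjOnly (G : SimpleGraph V) (v w x : V) : Prop :=
  x ≠ v ∧ x ≠ w ∧ G.Adj v x ∧ ¬ G.Adj w x

/-- `x` is adjacent to both `v` and `w` (and differs from both). -/
def adjBoth (G : SimpleGraph V) (v w x : V) : Prop :=
  x ≠ v ∧ x ≠ w ∧ G.Adj v x ∧ G.Adj w x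

def pivotToggleHalf (G : SimpleGraph V) (v w x y : V) : Prop :=
  (adjOnly G v w x ∧ adjOnly G w v y) ∨ (adjOnly G v w x ∧ adjBoth G v w y) ∨
    (adjOnly G w v x ∧ adjBoth G v w y)

/-- `x` and `y` lie in two distinct classes among `A_v`, `A_w`, `A_{vw}`. -/
def pivotToggle (G : SimpleGraph V) (v w x y : V) : Prop :=
  pivotToggleHalf G v w x y ∨ pivotToggleHalf G v w y x

/-- The pivot `G^{vw}`: adjacency between vertices in distinct classes among
`A_v`, `A_w`, `A_{vw}` is toggled; all other adjacencies are unchanged. -/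
def pivot (G : SimpleGraph V) (v w : V) : SimpleGraph V where
  Adj x y := x ≠ y ∧
    ((pivotToggle G v w x y ∧ ¬ G.Adj x y) ∨ (¬ pivotToggle G v w x y ∧ G.Adj x y))
  symm := by
    constructor
    intro x y h
    obtain ⟨hne, h⟩ := h
    have hsym : pivotToggle G v w y x ↔ pivotToggle G v w x y := by
      unfold pivotToggle; exact or_comm
    refine ⟨hne.symm, ?_⟩
    rcases h with ⟨ht, hna⟩ | ⟨ht, ha⟩
    · exact Or.inl ⟨hsym.mpr ht, fun hyx => hna hyx.symm⟩
    · exact Or.inr ⟨fun hyx => ht (hsym.mp hyx), ha.symm⟩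
  loopless := ⟨fun x h => h.1 rfl⟩

/-- Deleting the vertex `v`: the induced subgraph on `V \ {v}`. -/
def delVert (G : SimpleGraph V) (v : V) : SimpleGraph {x : V // x ≠ v} :=
  SimpleGraph.comap Subtype.val G

/-- The induced subgraph on a finite vertex subset. -/
def inducedF (G : SimpleGraph V) (s : Finset V) : SimpleGraph {x : V // x ∈ s} :=
  SimpleGraph.comap Subtype.val G

/-- Adding a new pendant vertex (`none`) attached to `u`. -/
def addPendant (G : SimpleGraph V) (u : V) : SimpleGraph (Option V) :=
  SimpleGraph.fromRel (fun x y =>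
    (x = none ∧ y = some u) ∨ ∃ a b, x = some a ∧ y = some b ∧ G.Adj a b)

/-- Adding a new false twin (`none`) of the vertex `v`. -/
def addFalseTwin (G : SimpleGraph V) (v : V) : SimpleGraph (Option V) :=
  SimpleGraph.fromRel (fun x y =>
    (∃ a, x = none ∧ y = some a ∧ G.Adj v a) ∨ ∃ a b, x = some a ∧ y = some b ∧ G.Adj a b)

/-- Adding a new true twin (`none`) of the vertex `v`. -/
def addTrueTwin (G : SimpleGraph V) (v : V) : SimpleGraph (Option V) :=
  SimpleGraph.fromRel (fun x y =>
    (x = none ∧ y = some v) ∨ (∃ a, x = none ∧ y = some a ∧ G.Adj v a) ∨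
      ∃ a b, x = some a ∧ y = some b ∧ G.Adj a b)
/-- `G` is a bipartite distance hereditary graph: obtainable (up to isomorphism) from a
one-vertex graph by adding pendant vertices and false twins of non-isolated vertices. -/
inductive IsBDH : {W : Type u} → SimpleGraph W → Prop
  | single : IsBDH (⊥ : SimpleGraph PUnit)
  | pendant {W : Type u} (G : SimpleGraph W) (u : W) : IsBDH G → IsBDH (addPendant G u)
  | falseTwin {W : Type u} (G : SimpleGraph W) (v : W) (hv : ∃ x, G.Adj v x) :
      IsBDH G → IsBDH (addFalseTwin G v)
  | iso {W W' : Type u} (G : SimpleGraph W) (H : SimpleGraph W') :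
      IsBDH G → G ≃g H → IsBDH H

/-- `DHConstruction G n` : `G` admits a DH construction sequence (up to isomorphism,
starting from a one-vertex graph, adding pendant vertices, false twins and true twins of
non-isolated vertices) with exactly `n` true twins. -/
inductive DHConstruction : {W : Type u} → SimpleGraph W → ℕ → Prop
  | single : DHConstruction (⊥ : SimpleGraph PUnit) 0
  | pendant {W : Type u} (G : SimpleGraph W) (u : W) {n : ℕ} :
      DHConstruction G n → DHConstruction (addPendant G u) n
  | falseTwin {W : Type u} (G : SimpleGraph W) (v : W) (hv : ∃ x, G.Adj v x) {n : ℕ} :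
      DHConstruction G n → DHConstruction (addFalseTwin G v) n
  | trueTwin {W : Type u} (G : SimpleGraph W) (v : W) (hv : ∃ x, G.Adj v x) {n : ℕ} :
      DHConstruction G n → DHConstruction (addTrueTwin G v) (n + 1)
  | iso {W W' : Type u} (G : SimpleGraph W) (H : SimpleGraph W') {n : ℕ} :
      DHConstruction G n → G ≃g H → DHConstruction H n



theorem finrank_submodule_prod {F M N : Type*} [Field F] [AddCommGroup M] [AddCommGroup N]
    [Module F M] [Module F N] [FiniteDimensional F M] [FiniteDimensional F N]
    (p : Submodule F M) (q : Submodule F N) :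
    Module.finrank F (p.prod q) = Module.finrank F p + Module.finrank F q := by
  have e : (p.prod q) ≃ₗ[F] p × q :=
    { toFun := fun x => (⟨x.1.1, (Submodule.mem_prod.mp x.2).1⟩,
        ⟨x.1.2, (Submodule.mem_prod.mp x.2).2⟩)
      invFun := fun y => ⟨(y.1.1, y.2.1), Submodule.mem_prod.mpr ⟨y.1.2, y.2.2⟩⟩
      map_add' := fun a b => rfl
      map_smul' := fun c a => rfl
      left_inv := fun a => rfl
      right_inv := fun a => rfl }
  rw [e.finrank_eq, Module.finrank_prod]

theorem myrange_prodMap {F M N M' N' : Type*} [Field F] [AddCommGroup M] [AddCommGroup N]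
    [AddCommGroup M'] [AddCommGroup N'] [Module F M] [Module F N] [Module F M'] [Module F N']
    (f : M →ₗ[F] M') (g : N →ₗ[F] N') :
    LinearMap.range (f.prodMap g) = (LinearMap.range f).prod (LinearMap.range g) := by
  ext ⟨a, b⟩
  simp only [LinearMap.mem_range, Submodule.mem_prod, LinearMap.prodMap_apply, Prod.ext_iff,
    Prod.exists]
  tauto

theorem rank_fromBlocks_diag {F m n : Type*} [Field F] [Fintype m] [Fintype n]
    [DecidableEq m] [DecidableEq n] (A : Matrix m m F) (D : Matrix n n F) :
    (Matrix.fromBlocks A 0 0 D).rank = A.rank + D.rank := by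
  classical
  let e := LinearEquiv.sumArrowLequivProdArrow m n F F
  have hcomp : (Matrix.fromBlocks A 0 0 D).mulVecLin =
      (e.symm.toLinearMap.comp ((A.mulVecLin.prodMap D.mulVecLin).comp e.toLinearMap)) := by
    apply LinearMap.ext; intro x
    funext i
    cases i with
    | inl i =>
        simp [e, Matrix.mulVecLin_apply, Matrix.mulVec, dotProduct,
          Fintype.sum_sum_type, LinearEquiv.sumArrowLequivProdArrow]
    | inr i =>
        simp [e, Matrix.mulVecLin_apply, Matrix.mulVec, dotProduct,
          Fintype.sum_sum_type, LinearEquiv.sumArrowLequivProdArrow]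
  rw [Matrix.rank, hcomp, LinearMap.range_comp, LinearMap.range_comp,
    LinearEquiv.range, Submodule.map_top, LinearEquiv.finrank_map_eq,
    myrange_prodMap, finrank_submodule_prod]
  rfl

theorem rank_special {n : Type*} [Fintype n] [DecidableEq n]
    (A : Matrix n n (ZMod 2)) (a : n → ZMod 2) :
    (Matrix.fromBlocks (!![0,1;1,0] : Matrix (Fin 2) (Fin 2) (ZMod 2))
      (Matrix.of fun _ j => a j) (Matrix.of fun i _ => a i) A).rank = 2 + A.rank := by
  classical
  set J : Matrix (Fin 2) (Fin 2) (ZMod 2) := !![0,1;1,0] with hJdef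
  have hJJ : J * J = 1 := by
    ext i j
    fin_cases i <;> fin_cases j <;> decide
  letI iJ : Invertible J := ⟨J, hJJ, hJJ⟩
  have hinv : (⅟J : Matrix (Fin 2) (Fin 2) (ZMod 2)) = J := rfl
  set B : Matrix (Fin 2) n (ZMod 2) := Matrix.of fun _ j => a j with hB
  set C : Matrix n (Fin 2) (ZMod 2) := Matrix.of fun i _ => a i with hC
  have hCJ : C * ⅟J = C := by
    rw [hinv]
    ext i j
    fin_cases j <;>
      simp [Matrix.mul_apply, Fin.sum_univ_two, hC, hJdef]
  have hCB : C * B = 0 := by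
    ext i j
    have h2 : ∀ x : ZMod 2, x + x = 0 := by decide
    simp only [Matrix.mul_apply, Fin.sum_univ_two, hC, hB, Matrix.of_apply, Matrix.zero_apply]
    exact h2 _
  have hSchur : A - C * ⅟J * B = A := by
    rw [hCJ, hCB, sub_zero]
  have hfact := Matrix.fromBlocks_eq_of_invertible₁₁ J B C A
  rw [hfact]
  have hL : IsUnit (Matrix.fromBlocks (1 : Matrix (Fin 2) (Fin 2) (ZMod 2)) 0 (C * ⅟J)
      (1 : Matrix n n (ZMod 2))).det := by
    rw [Matrix.det_fromBlocks_zero₁₂]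
    simp
  have hR : IsUnit (Matrix.fromBlocks (1 : Matrix (Fin 2) (Fin 2) (ZMod 2)) (⅟J * B) 0
      (1 : Matrix n n (ZMod 2))).det := by
    rw [Matrix.det_fromBlocks_zero₂₁]
    simp
  rw [Matrix.rank_mul_eq_left_of_isUnit_det _ _ hR, Matrix.rank_mul_eq_right_of_isUnit_det _ _ hL,
    hSchur, rank_fromBlocks_diag]
  congr 1
  have : IsUnit J := isUnit_of_invertible J
  rw [Matrix.rank_of_isUnit J this]
  simp


/-- copied defs -/

theorem addTrueTwin_adj_some_some (G : SimpleGraph V) (v a b : V) :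
    (addTrueTwin G v).Adj (some a) (some b) ↔ G.Adj a b := by
  rw [addTrueTwin, SimpleGraph.fromRel_adj]
  constructor
  · rintro ⟨hne, (⟨h, -⟩ | ⟨x, h, -⟩ | ⟨x, y, hx, hy, hadj⟩) |
      (⟨h, -⟩ | ⟨x, h, -⟩ | ⟨x, y, hx, hy, hadj⟩)⟩
    · exact absurd h (by simp)
    · exact absurd h (by simp)
    · obtain rfl : a = x := by injection hx
      obtain rfl : b = y := by injection hy
      exact hadj
    · exact absurd h (by simp)
    · exact absurd h (by simp)
    · obtain rfl : b = x := by injection hx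
      obtain rfl : a = y := by injection hy
      exact hadj.symm
  · intro h
    exact ⟨by simpa using h.ne, Or.inl (Or.inr (Or.inr ⟨a, b, rfl, rfl, h⟩))⟩

theorem addTrueTwin_adj_none_some (G : SimpleGraph V) (v a : V) :
    (addTrueTwin G v).Adj none (some a) ↔ a = v ∨ G.Adj v a := by
  rw [addTrueTwin, SimpleGraph.fromRel_adj]
  constructor
  · rintro ⟨hne, (⟨-, h⟩ | ⟨x, -, hx, hadj⟩ | ⟨x, y, hx, -, -⟩) |
      (⟨h, -⟩ | ⟨x, h, -⟩ | ⟨x, y, -, hy, -⟩)⟩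
    · exact Or.inl (by injection h)
    · obtain rfl : a = x := by injection hx
      exact Or.inr hadj
    · exact absurd hx (by simp)
    · exact absurd h (by simp)
    · exact absurd h (by simp)
    · exact absurd hy (by simp)
  · rintro (rfl | h)
    · exact ⟨by simp, Or.inl (Or.inl ⟨rfl, rfl⟩)⟩
    · exact ⟨by simp, Or.inl (Or.inr (Or.inl ⟨a, rfl, rfl, h⟩))⟩

theorem rankIn_congr {V W : Type*} [Fintype V] [Fintype W] {G : SimpleGraph V}
    {H : SimpleGraph W} {S : Finset V} {T : Finset W} (e : {x // x ∈ S} ≃ {x // x ∈ T})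
    (he : ∀ a b : {x // x ∈ S}, G.Adj a b ↔ H.Adj (e a) (e b)) :
    rankIn G S = rankIn H T := by
  classical
  unfold rankIn
  letI := Classical.decRel G.Adj
  letI := Classical.decRel H.Adj
  have h1 : ((SimpleGraph.adjMatrix (ZMod 2) G).submatrix
        (fun i : S => (i : V)) (fun i : S => (i : V)))
      = (((SimpleGraph.adjMatrix (ZMod 2) H).submatrix
        (fun i : T => (i : W)) (fun i : T => (i : W))).submatrix e e) := by
    ext a b
    simp only [Matrix.submatrix_apply, SimpleGraph.adjMatrix_apply]
    exact if_congr (he a b) rfl rfl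
  rw [h1, Matrix.rank_submatrix]

theorem rankIn_le_card [Fintype V] (G : SimpleGraph V) (S : Finset V) :
    rankIn G S ≤ S.card := by
  classical
  unfold rankIn
  simpa [Fintype.card_coe] using Matrix.rank_le_card_height ((SimpleGraph.adjMatrix (ZMod 2) G).submatrix
    (fun i : S => (i : V)) (fun i : S => (i : V)))

theorem addTrueTwin_adj_some_none (G : SimpleGraph V) (v a : V) :
    (addTrueTwin G v).Adj (some a) none ↔ a = v ∨ G.Adj v a := by
  rw [SimpleGraph.adj_comm, addTrueTwin_adj_none_some]

theorem rankIn_map_some [Fintype V] (G : SimpleGraph V) (v : V) (T : Finset V) :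
    rankIn (addTrueTwin G v) (T.map Function.Embedding.some) = rankIn G T := by
  classical
  refine (rankIn_congr (V := V) (W := Option V) (G := G) (H := addTrueTwin G v)
    (S := T) (T := T.map Function.Embedding.some) ?_ ?_).symm
  · refine Equiv.ofBijective (fun a => ⟨some a.1, Finset.mem_map_of_mem _ a.2⟩) ⟨?_, ?_⟩
    · intro a b hab
      exact Subtype.ext (Option.some_injective _ (congrArg Subtype.val hab))
    · rintro ⟨x, hx⟩
      obtain ⟨a, ha, rfl⟩ := Finset.mem_map.mp hx
      exact ⟨⟨a, ha⟩, rfl⟩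
  · intro a b
    exact (addTrueTwin_adj_some_some G v a b).symm

theorem rankIn_delVert [Fintype V] [DecidableEq V] (G : SimpleGraph V) (v : V)
    (U : Finset {x : V // x ≠ v}) :
    rankIn (delVert G v) U = rankIn G (U.map (Function.Embedding.subtype _)) := by
  classical
  refine rankIn_congr ?_ ?_
  · refine Equiv.ofBijective (fun a => ⟨a.1.1, Finset.mem_map_of_mem _ a.2⟩) ⟨?_, ?_⟩
    · intro a b hab
      exact Subtype.ext (Subtype.ext (by simpa [Subtype.ext_iff] using hab))
    · rintro ⟨x, hx⟩
      obtain ⟨a, ha, rfl⟩ := Finset.mem_map.mp hx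
      exact ⟨⟨a, ha⟩, rfl⟩
  · intro a b
    exact Iff.rfl

theorem rankIn_insertNone_not_mem [Fintype V] [DecidableEq V] (G : SimpleGraph V) (v : V)
    (T : Finset V) (hvT : v ∉ T) :
    rankIn (addTrueTwin G v) (Finset.insertNone T) = rankIn G (insert v T) := by
  classical
  have hmor : ∀ a : {x // x ∈ insert v T}, (a : V) ∈ insert v T := fun a => a.2
  let f : {x // x ∈ insert v T} → {x // x ∈ Finset.insertNone T} := fun a =>
    if h : (a : V) = v then ⟨none, by simp⟩
    else ⟨some (a : V), by
      simp only [Finset.some_mem_insertNone]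
      rcases Finset.mem_insert.mp a.2 with h' | h'
      · exact absurd h' h
      · exact h'⟩
  have hf0 : ∀ a : {x // x ∈ insert v T}, ((f a : Option V)) =
      if (a : V) = v then none else some (a : V) := by
    intro a
    by_cases h : (a : V) = v <;> simp [f, h]
  have hbij : Function.Bijective f := by
    constructor
    · intro a b hab
      have := congrArg Subtype.val hab
      rw [hf0, hf0] at this
      by_cases ha : (a : V) = v <;> by_cases hb : (b : V) = v <;>
        simp [ha, hb] at this <;> apply Subtype.ext
      · rw [ha, hb]
      · rw [this]
    · rintro ⟨x, hx⟩
      match x, hx with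
      | none, _ => exact ⟨⟨v, Finset.mem_insert_self v T⟩, by apply Subtype.ext; simp [hf0]⟩
      | some b, hx =>
        have hbT : b ∈ T := Finset.some_mem_insertNone.mp hx
        have hbv : b ≠ v := fun h => hvT (h ▸ hbT)
        exact ⟨⟨b, Finset.mem_insert_of_mem hbT⟩, by apply Subtype.ext; simp [hf0, hbv]⟩
  refine (rankIn_congr (Equiv.ofBijective f hbij) ?_).symm
  intro a b
  show G.Adj a b ↔ (addTrueTwin G v).Adj (f a) (f b)
  by_cases ha : (a : V) = v <;> by_cases hb : (b : V) = v
  · rw [show ((f a : Option V)) = none by rw [hf0]; simp [ha],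
      show ((f b : Option V)) = none by rw [hf0]; simp [hb], ha, hb]
    simp
  · rw [show ((f a : Option V)) = none by rw [hf0]; simp [ha],
      show ((f b : Option V)) = some (b : V) by rw [hf0]; simp [hb], ha]
    rw [addTrueTwin_adj_none_some]
    simp [hb]
  · rw [show ((f a : Option V)) = some (a : V) by rw [hf0]; simp [ha],
      show ((f b : Option V)) = none by rw [hf0]; simp [hb], hb]
    rw [addTrueTwin_adj_some_none, SimpleGraph.adj_comm]
    simp [ha]
  · rw [show ((f a : Option V)) = some (a : V) by rw [hf0]; simp [ha],
      show ((f b : Option V)) = some (b : V) by rw [hf0]; simp [hb]]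
    exact (addTrueTwin_adj_some_some G v a b).symm

theorem rankIn_insertNone_mem [Fintype V] [DecidableEq V] (G : SimpleGraph V) (v : V)
    (T : Finset V) (hvT : v ∈ T) :
    rankIn (addTrueTwin G v) (Finset.insertNone T) = 2 + rankIn G (T.erase v) := by
  classical
  letI : DecidableRel G.Adj := Classical.decRel G.Adj
  letI : DecidableRel (addTrueTwin G v).Adj := Classical.decRel (addTrueTwin G v).Adj
  set T' := T.erase v with hT'
  set a : {x // x ∈ T'} → ZMod 2 := (fun x => if G.Adj v x then 1 else 0) with ha
  set A : Matrix {x // x ∈ T'} {x // x ∈ T'} (ZMod 2) :=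
    (SimpleGraph.adjMatrix (ZMod 2) G).submatrix (fun i => (i : V)) (fun i => (i : V)) with hA
  let f : Fin 2 ⊕ {x // x ∈ T'} → {x // x ∈ Finset.insertNone T} :=
    Sum.elim (fun i => if i = 0 then ⟨none, by simp⟩ else ⟨some v, by simp [hvT]⟩)
      (fun x => ⟨some (x : V), by simp [Finset.mem_of_mem_erase x.2]⟩)
  have hbij : Function.Bijective f := by
    constructor
    · rintro (i | x) (j | y) hab
      · fin_cases i <;> fin_cases j <;>
          first
          | rfl
          | simp [f, Subtype.ext_iff] at hab
      · exfalso
        have hy : (y : V) ≠ v := Finset.ne_of_mem_erase y.2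
        fin_cases i <;> simp [f, Subtype.ext_iff] at hab <;> exact hy hab.symm
      · exfalso
        have hx : (x : V) ≠ v := Finset.ne_of_mem_erase x.2
        fin_cases j <;> simp [f, Subtype.ext_iff] at hab <;> exact hx hab
      · have := congrArg Subtype.val hab
        simp only [f, Sum.elim_inr] at this
        exact congrArg Sum.inr (Subtype.ext (Option.some_injective _ this))
    · rintro ⟨x, hx⟩
      match x, hx with
      | none, _ => exact ⟨Sum.inl 0, by apply Subtype.ext; simp [f]⟩
      | some b, hx =>
        have hbT : b ∈ T := Finset.some_mem_insertNone.mp hx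
        by_cases hbv : b = v
        · exact ⟨Sum.inl 1, by apply Subtype.ext; simp [f, hbv]⟩
        · exact ⟨Sum.inr ⟨b, Finset.mem_erase.mpr ⟨hbv, hbT⟩⟩, by apply Subtype.ext; simp [f]⟩
  let e := Equiv.ofBijective f hbij
  have key : rankIn (addTrueTwin G v) (Finset.insertNone T) =
      (Matrix.fromBlocks (!![0,1;1,0] : Matrix (Fin 2) (Fin 2) (ZMod 2))
        (Matrix.of fun _ j => a j) (Matrix.of fun i _ => a i) A).rank := by
    unfold rankIn
    rw [← Matrix.rank_submatrix _ e e]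
    congr 1
    ext i j
    have hcoe : ∀ i, ((e i : Option V)) = Sum.elim
        (fun i : Fin 2 => if i = 0 then (none : Option V) else some v)
        (fun x : {x // x ∈ T'} => some (x : V)) i := by
      rintro (i | x)
      · by_cases h : i = 0 <;> simp [e, f, h]
      · simp [e, f]
    rcases i with i | x <;> rcases j with j | y
    · fin_cases i <;> fin_cases j <;>
        simp [hcoe, SimpleGraph.adjMatrix_apply, addTrueTwin_adj_none_some,
          addTrueTwin_adj_some_none, SimpleGraph.irrefl, addTrueTwin_adj_some_some]
    · have hyv : (y : V) ≠ v := Finset.ne_of_mem_erase y.2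
      fin_cases i <;>
        simp [hcoe, SimpleGraph.adjMatrix_apply, addTrueTwin_adj_none_some,
          addTrueTwin_adj_some_some, hyv, ha]
    · have hxv : (x : V) ≠ v := Finset.ne_of_mem_erase x.2
      have hc : G.Adj (x : V) v ↔ G.Adj v (x : V) := G.adj_comm _ _
      fin_cases j <;>
        simp [hcoe, SimpleGraph.adjMatrix_apply, addTrueTwin_adj_some_none,
          addTrueTwin_adj_some_some, hxv, hc, ha]
    · simp [hcoe, SimpleGraph.adjMatrix_apply, addTrueTwin_adj_some_some, hA]
  rw [key, rank_special]
  rfl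

noncomputable def qTerm {W : Type u} [Fintype W] (G : SimpleGraph W) (S : Finset W) :
    MvPolynomial (Fin 2) ℤ :=
  (MvPolynomial.X 0 - 1) ^ (rankIn G S) * (MvPolynomial.X 1 - 1) ^ (S.card - rankIn G S)

theorem interlaceQ_eq_sum {W : Type u} [Fintype W] (G : SimpleGraph W) :
    interlaceQ G = ∑ S : Finset W, qTerm G S := rfl

theorem qTerm_map_some [Fintype V] (G : SimpleGraph V) (v : V) (T : Finset V) :
    qTerm (addTrueTwin G v) (T.map Function.Embedding.some) = qTerm G T := by
  unfold qTerm
  rw [rankIn_map_some, Finset.card_map]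

theorem qTerm_insertNone_not_mem [Fintype V] [DecidableEq V] (G : SimpleGraph V) (v : V)
    (T : Finset V) (hvT : v ∉ T) :
    qTerm (addTrueTwin G v) (Finset.insertNone T) = qTerm G (insert v T) := by
  unfold qTerm
  rw [rankIn_insertNone_not_mem _ _ _ hvT, Finset.card_insertNone,
    Finset.card_insert_of_notMem hvT]

theorem qTerm_insertNone_mem [Fintype V] [DecidableEq V] (G : SimpleGraph V) (v : V)
    (T : Finset V) (hvT : v ∈ T) :
    qTerm (addTrueTwin G v) (Finset.insertNone T) =
      (MvPolynomial.X 0 - 1) ^ 2 * qTerm G (T.erase v) := by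
  unfold qTerm
  rw [rankIn_insertNone_mem _ _ _ hvT, Finset.card_insertNone]
  have h1 : (T.erase v).card + 1 = T.card := Finset.card_erase_add_one hvT
  have h2 : rankIn G (T.erase v) ≤ (T.erase v).card := rankIn_le_card _ _
  have h3 : T.card + 1 - (2 + rankIn G (T.erase v)) =
      (T.erase v).card - rankIn G (T.erase v) := by omega
  rw [h3, pow_add]
  ring

theorem qTerm_delVert [Fintype V] [DecidableEq V] (G : SimpleGraph V) (v : V)
    (U : Finset {x : V // x ≠ v}) :
    qTerm (delVert G v) U = qTerm G (U.map (Function.Embedding.subtype _)) := by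
  unfold qTerm
  rw [rankIn_delVert, Finset.card_map]

/-- If `G'''` results from adding a true twin `w` of a non-isolated vertex `v` of a
loopless graph `G`, then `q(G''';x,y) = 2·q(G;x,y) + ((x-1)² - 1)·q(G - v;x,y)`. -/
theorem interlaceQ_addTrueTwin {V : Type u} [Fintype V] [DecidableEq V]
    (G : SimpleGraph V) (v : V) (hv : ∃ x, G.Adj v x) :
    interlaceQ (addTrueTwin G v) =
      2 * interlaceQ G +
        ((MvPolynomial.X 0 - 1) ^ 2 - 1) * interlaceQ (delVert G v) := by
  classical
  set xm : MvPolynomial (Fin 2) ℤ := MvPolynomial.X 0 - 1 with hxm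
  set Dv := ∑ T ∈ Finset.univ.filter (fun T : Finset V => v ∉ T), qTerm G T with hDv
  set Sv := ∑ T ∈ Finset.univ.filter (fun T : Finset V => v ∈ T), qTerm G T with hSv
  have h1 : interlaceQ (addTrueTwin G v) =
      (∑ T : Finset V, qTerm (addTrueTwin G v) (T.map Function.Embedding.some)) +
      (∑ T : Finset V, qTerm (addTrueTwin G v) (Finset.insertNone T)) := by
    rw [interlaceQ_eq_sum,
      ← Finset.sum_filter_add_sum_filter_not Finset.univ
        (fun S : Finset (Option V) => none ∉ S) (qTerm (addTrueTwin G v))]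
    congr 1
    · refine (Finset.sum_nbij' (fun T : Finset V => T.map Function.Embedding.some)
        Finset.eraseNone ?_ ?_ ?_ ?_ ?_).symm
      · intro T _
        simp
      · intro S _
        exact Finset.mem_univ _
      · intro T _
        exact Finset.eraseNone_map_some T
      · intro S hS
        rw [Finset.map_some_eraseNone]
        exact Finset.erase_eq_of_notMem (by simpa using (Finset.mem_filter.mp hS).2)
      · intro T _
        rfl
    · refine (Finset.sum_nbij' (fun T : Finset V => Finset.insertNone T)
        Finset.eraseNone ?_ ?_ ?_ ?_ ?_).symm
      · intro T _
        simp
      · intro S _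
        exact Finset.mem_univ _
      · intro T _
        exact Finset.eraseNone_insertNone T
      · intro S hS
        rw [Finset.insertNone_eraseNone]
        exact Finset.insert_eq_self.mpr (by simpa using (Finset.mem_filter.mp hS).2)
      · intro T _
        rfl
  have h2 : (∑ T : Finset V, qTerm (addTrueTwin G v) (T.map Function.Embedding.some)) =
      interlaceQ G := by
    rw [interlaceQ_eq_sum]
    exact Finset.sum_congr rfl fun T _ => qTerm_map_some G v T
  have h3 : (∑ T : Finset V, qTerm (addTrueTwin G v) (Finset.insertNone T)) =
      xm ^ 2 * Dv + Sv := by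
    rw [← Finset.sum_filter_add_sum_filter_not Finset.univ
      (fun T : Finset V => v ∈ T) (fun T => qTerm (addTrueTwin G v) (Finset.insertNone T))]
    congr 1
    · rw [hDv, Finset.mul_sum]
      refine Finset.sum_nbij' (fun T : Finset V => T.erase v) (fun T => insert v T)
        ?_ ?_ ?_ ?_ ?_
      · intro T _
        simp
      · intro T hT
        simp
      · intro T hT
        exact Finset.insert_erase (by simpa using (Finset.mem_filter.mp hT).2)
      · intro T hT
        exact Finset.erase_insert (by simpa using (Finset.mem_filter.mp hT).2)
      · intro T hT
        exact qTerm_insertNone_mem G v T (by simpa using (Finset.mem_filter.mp hT).2)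
    · rw [hSv]
      refine Finset.sum_nbij' (fun T : Finset V => insert v T) (fun T => T.erase v)
        ?_ ?_ ?_ ?_ ?_
      · intro T hT
        simp
      · intro T hT
        simp
      · intro T hT
        exact Finset.erase_insert (by simpa using (Finset.mem_filter.mp hT).2)
      · intro T hT
        exact Finset.insert_erase (by simpa using (Finset.mem_filter.mp hT).2)
      · intro T hT
        exact qTerm_insertNone_not_mem G v T (by simpa using (Finset.mem_filter.mp hT).2)
  have hIns : Sv + Dv = interlaceQ G := by
    rw [interlaceQ_eq_sum, hSv, hDv]
    exact Finset.sum_filter_add_sum_filter_not Finset.univ _ _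
  have hDel : interlaceQ (delVert G v) = Dv := by
    rw [interlaceQ_eq_sum, hDv]
    refine Finset.sum_nbij' (fun U : Finset {x : V // x ≠ v} =>
        U.map (Function.Embedding.subtype _)) (fun T => T.subtype (· ≠ v)) ?_ ?_ ?_ ?_ ?_
    · intro U _
      simp only [Finset.mem_filter, Finset.mem_univ, true_and]
      intro hmem
      obtain ⟨a, -, ha⟩ := Finset.mem_map.mp hmem
      exact a.2 (by simpa using ha)
    · intro T _
      exact Finset.mem_univ _
    · intro U _
      ext a
      simp [Finset.mem_subtype, Finset.mem_map, Subtype.ext_iff]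
      exact fun _ => a.2
    · intro T hT
      rw [Finset.subtype_map]
      refine Finset.filter_true_of_mem ?_
      intro x hx h
      have hvT : v ∉ T := by simpa using (Finset.mem_filter.mp hT).2
      exact hvT (h ▸ hx)
    · intro U _
      exact qTerm_delVert G v U
  rw [h1, h2, h3, hDel]
  linear_combination hIns
end

section
/- Let G be a finite simple graph, let u be a vertex of G, and let G' be the graph obtained from G by adding a pendant vertex w to u. Then q_N(G';x) = q_N(G;x) + x·q_N(G − u; x), where G − u denotes the induced subgraph of G on V ∖ {u}. -/
open Polynomial

universe u

variable {V : Type u}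

section Aux
open Matrix Module

-- test kernel rank lemma for the zero row/col case
lemma rank_option_zero {K : Type*} [Field K] {m : Type*} [Fintype m] [DecidableEq m]
    (A : Matrix (Option m) (Option m) K)
    (h1 : ∀ j, A none j = 0) (h2 : ∀ i, A i none = 0) :
    A.rank = (A.submatrix some some).rank := by
  classical
  set B := A.submatrix some some with hB
  have key : ∀ v : Option m → K, A.mulVec v = 0 ↔ B.mulVec (fun j => v (some j)) = 0 := by
    intro v
    have expand : ∀ i, A.mulVec v i = A i none * v none + ∑ j, A i (some j) * v (some j) := by
      intro i
      simp [Matrix.mulVec, dotProduct, Fintype.sum_option]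
    constructor
    · intro hv
      funext i
      have := congrFun hv (some i)
      rw [expand] at this
      simpa [h2, hB, Matrix.mulVec, dotProduct] using this
    · intro hv
      funext i
      cases i with
      | none => rw [expand]; simp [h1]
      | some i =>
        have := congrFun hv i
        rw [expand, h2]
        simpa [hB, Matrix.mulVec, dotProduct] using this
  let e : (LinearMap.ker A.mulVecLin) ≃ₗ[K] K × (LinearMap.ker B.mulVecLin) :=
    { toFun := fun v => (v.1 none, ⟨fun j => v.1 (some j), by
        rw [LinearMap.mem_ker, Matrix.mulVecLin_apply]
        have hv := v.2
        rw [LinearMap.mem_ker, Matrix.mulVecLin_apply] at hv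
        exact (key v.1).mp hv⟩)
      map_add' := fun v w => rfl
      map_smul' := fun c v => rfl
      invFun := fun p => ⟨fun o => o.elim p.1 p.2.1, by
        rw [LinearMap.mem_ker, Matrix.mulVecLin_apply]
        have hp := p.2.2
        rw [LinearMap.mem_ker, Matrix.mulVecLin_apply] at hp
        exact (key _).mpr hp⟩
      left_inv := fun v => Subtype.ext (funext fun o => by cases o <;> rfl)
      right_inv := fun p => by
        refine Prod.ext rfl (Subtype.ext (funext fun j => rfl)) }
  have hA := LinearMap.finrank_range_add_finrank_ker (A.mulVecLin)
  have hBr := LinearMap.finrank_range_add_finrank_ker (B.mulVecLin)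
  rw [Module.finrank_fintype_fun_eq_card, Fintype.card_option] at hA
  rw [Module.finrank_fintype_fun_eq_card] at hBr
  have hk : finrank K (LinearMap.ker A.mulVecLin)
      = 1 + finrank K (LinearMap.ker B.mulVecLin) := by
    rw [e.finrank_eq, Module.finrank_prod, Module.finrank_self]
  rw [Matrix.rank, Matrix.rank] at *
  omega


lemma rank_option_pendant {K : Type*} [Field K] {m : Type*} [Fintype m] [DecidableEq m]
    (A : Matrix (Option (Option m)) (Option (Option m)) K)
    (h1 : ∀ j, A none j = if j = some none then 1 else 0)
    (h2 : ∀ i, A i none = if i = some none then 1 else 0) :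
    A.rank = (A.submatrix (fun i => some (some i)) (fun i => some (some i))).rank + 2 := by
  classical
  set B := A.submatrix (fun i : m => some (some i)) (fun i : m => some (some i)) with hB
  have expand : ∀ (w : Option (Option m) → K) i, A.mulVec w i =
      A i none * w none + A i (some none) * w (some none)
        + ∑ j, A i (some (some j)) * w (some (some j)) := by
    intro w i
    simp [Matrix.mulVec, dotProduct, Fintype.sum_option]
    ring
  -- characterize the kernel
  have kerS : ∀ v : Option (Option m) → K, A.mulVec v = 0 → v (some none) = 0 := by
    intro v hv
    have := congrFun hv none
    rw [expand] at this
    simpa [h1] using this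
  have kerB : ∀ v : Option (Option m) → K, A.mulVec v = 0 →
      B.mulVec (fun j => v (some (some j))) = 0 := by
    intro v hv
    funext i
    have h0 := congrFun hv (some (some i))
    rw [expand, h2] at h0
    have hs := kerS v hv
    simp only [hs, mul_zero, if_neg (by simp : (some (some i) : Option (Option m)) ≠ some none),
      zero_mul, zero_add, add_zero] at h0
    simpa [hB, Matrix.mulVec, dotProduct] using h0
  have kerT : ∀ v : Option (Option m) → K, A.mulVec v = 0 →
      v none = -∑ j, A (some none) (some (some j)) * v (some (some j)) := by
    intro v hv
    have h0 := congrFun hv (some none)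
    rw [expand, h2] at h0
    have hs := kerS v hv
    simp only [hs, mul_zero, if_pos rfl, if_true, one_mul, add_zero, Pi.zero_apply] at h0
    exact eq_neg_of_add_eq_zero_left h0
  -- the reverse construction
  have rev : ∀ x : m → K, B.mulVec x = 0 →
      A.mulVec (fun o => Option.elim o (-∑ j, A (some none) (some (some j)) * x j)
        (fun o' => Option.elim o' 0 x)) = 0 := by
    intro x hx
    funext i
    rw [expand]
    cases i with
    | none => simp [h1]
    | some i =>
      cases i with
      | none =>
        rw [h2]
        simp
      | some i =>
        rw [h2]
        have := congrFun hx i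
        simp only [hB, Matrix.mulVec, dotProduct, Matrix.submatrix_apply,
          Pi.zero_apply] at this
        simpa using this
  let e : (LinearMap.ker A.mulVecLin) ≃ₗ[K] (LinearMap.ker B.mulVecLin) :=
    { toFun := fun v => ⟨fun j => v.1 (some (some j)), by
        rw [LinearMap.mem_ker, Matrix.mulVecLin_apply]
        have hv := v.2
        rw [LinearMap.mem_ker, Matrix.mulVecLin_apply] at hv
        exact kerB v.1 hv⟩
      map_add' := fun v w => rfl
      map_smul' := fun c v => rfl
      invFun := fun x => ⟨fun o => Option.elim o (-∑ j, A (some none) (some (some j)) * x.1 j)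
          (fun o' => Option.elim o' 0 x.1), by
        rw [LinearMap.mem_ker, Matrix.mulVecLin_apply]
        have hx := x.2
        rw [LinearMap.mem_ker, Matrix.mulVecLin_apply] at hx
        exact rev x.1 hx⟩
      left_inv := by
        rintro ⟨v, hv⟩
        rw [LinearMap.mem_ker, Matrix.mulVecLin_apply] at hv
        refine Subtype.ext (funext fun o => ?_)
        match o with
        | none => exact (kerT v hv).symm
        | some none => exact (kerS v hv).symm
        | some (some j) => rfl
      right_inv := fun x => Subtype.ext (funext fun j => rfl) }
  have hA := LinearMap.finrank_range_add_finrank_ker (A.mulVecLin)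
  have hBr := LinearMap.finrank_range_add_finrank_ker (B.mulVecLin)
  rw [Module.finrank_fintype_fun_eq_card, Fintype.card_option, Fintype.card_option] at hA
  rw [Module.finrank_fintype_fun_eq_card] at hBr
  have hk := e.finrank_eq
  rw [Matrix.rank, Matrix.rank] at *
  omega

end Aux


lemma sum_split_finset {α β M : Type*} [Fintype α] [DecidableEq α] [Fintype β]
    [AddCommMonoid M] (g : β ↪ α) (a : α) (hg : ∀ b, g b ≠ a)
    (hcov : ∀ x : α, x ≠ a → ∃ b, g b = x) (f : Finset α → M) :
    ∑ S : Finset α, f S = ∑ T : Finset β, (f (insert a (T.map g)) + f (T.map g)) := by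
  classical
  have hna : ∀ T : Finset β, a ∉ T.map g := by
    intro T hmem
    rcases Finset.mem_map.mp hmem with ⟨b, _, hb⟩
    exact hg b hb
  let e : Finset β × Bool → Finset α := fun p => if p.2 then insert a (p.1.map g) else p.1.map g
  have hbij : Function.Bijective e := by
    constructor
    · rintro ⟨T, b⟩ ⟨T', b'⟩ h
      simp only [e] at h
      cases b <;> cases b' <;> simp only [if_true, if_false, Bool.false_eq_true] at h
      · exact Prod.ext (Finset.map_injective g h) rfl
      · exact absurd (h ▸ Finset.mem_insert_self a (T'.map g)) (hna T)
      · exact absurd (h ▸ Finset.mem_insert_self a (T.map g)) (hna T')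
      · refine Prod.ext (Finset.map_injective g ?_) rfl
        have := congrArg (fun s => Finset.erase s a) h
        simpa [Finset.erase_insert (hna T), Finset.erase_insert (hna T')] using this
    · intro S
      refine ⟨(Finset.univ.filter (fun b => g b ∈ S), decide (a ∈ S)), ?_⟩
      have hmap : (Finset.univ.filter (fun b => g b ∈ S)).map g = S.erase a := by
        ext x
        simp only [Finset.mem_map, Finset.mem_filter, Finset.mem_univ, true_and,
          Finset.mem_erase]
        constructor
        · rintro ⟨b, hb, rfl⟩
          exact ⟨hg b, hb⟩
        · rintro ⟨hxa, hx⟩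
          rcases hcov x hxa with ⟨b, rfl⟩
          exact ⟨b, hx, rfl⟩
      by_cases hS : a ∈ S
      · simp only [e, hS, decide_eq_true_eq, decide_true, if_true, hmap]
        exact Finset.insert_erase hS
      · simp only [e, hS, decide_eq_true_eq, decide_false, if_false, hmap, Bool.false_eq_true]
        exact Finset.erase_eq_of_notMem hS
  rw [← Function.Bijective.sum_comp hbij f]
  rw [Fintype.sum_prod_type]
  refine Finset.sum_congr rfl fun T _ => ?_
  rw [Fintype.sum_bool]
  simp only [e, if_true, if_false, Bool.false_eq_true]


lemma addPendant_adj_some {V : Type u} (G : SimpleGraph V) (u a b : V) :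
    (addPendant G u).Adj (some a) (some b) ↔ G.Adj a b := by
  rw [addPendant, SimpleGraph.fromRel_adj]
  constructor
  · rintro ⟨hne, (⟨h, -⟩ | ⟨a', b', h1, h2, h3⟩) | (⟨h, -⟩ | ⟨a', b', h1, h2, h3⟩)⟩
    · simp at h
    · obtain rfl : a = a' := Option.some_injective _ h1
      obtain rfl : b = b' := Option.some_injective _ h2
      exact h3
    · simp at h
    · obtain rfl : b = a' := Option.some_injective _ h1
      obtain rfl : a = b' := Option.some_injective _ h2
      exact h3.symm
  · intro h
    exact ⟨by simp [h.ne], Or.inl (Or.inr ⟨a, b, rfl, rfl, h⟩)⟩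

lemma addPendant_adj_none {V : Type u} (G : SimpleGraph V) (u : V) (x : Option V) :
    (addPendant G u).Adj none x ↔ x = some u := by
  rw [addPendant, SimpleGraph.fromRel_adj]
  constructor
  · rintro ⟨hne, (⟨-, h⟩ | ⟨a', b', h1, h2, h3⟩) | (⟨h1, h2⟩ | ⟨a', b', h1, h2, h3⟩)⟩
    · exact h
    · simp at h1
    · simp at h2
    · simp at h2
  · rintro rfl
    exact ⟨by simp, Or.inl (Or.inl ⟨rfl, rfl⟩)⟩

lemma addPendant_adj_none' {V : Type u} (G : SimpleGraph V) (u : V) (x : Option V) :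
    (addPendant G u).Adj x none ↔ x = some u := by
  rw [SimpleGraph.adj_comm, addPendant_adj_none]

/-- rank equality transport along a bijection of indices. -/
lemma rank_eq_of_bij {K : Type*} [CommRing K] {n m : Type*} [Fintype n] [Fintype m]
    (A : Matrix n n K) (B : Matrix m m K) (e : m ≃ n)
    (h : ∀ i j, B i j = A (e i) (e j)) : B.rank = A.rank := by
  have hBA : B = A.submatrix e e := by ext i j; exact h i j
  rw [hBA, Matrix.rank_submatrix]

lemma rank_bij_zero {K : Type*} [Field K] {n m : Type*} [Fintype n] [Fintype m]
    [DecidableEq m] (A : Matrix n n K) (B : Matrix m m K) (e : Option m ≃ n)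
    (h1 : ∀ j, A (e none) (e j) = 0) (h2 : ∀ i, A (e i) (e none) = 0)
    (h3 : ∀ i j, B i j = A (e (some i)) (e (some j))) :
    A.rank = B.rank := by
  rw [← Matrix.rank_submatrix A e e, rank_option_zero (A.submatrix e e) h1 h2]
  congr 1
  ext i j
  exact (h3 i j).symm

lemma rank_bij_pendant {K : Type*} [Field K] {n m : Type*} [Fintype n] [Fintype m]
    [DecidableEq m] (A : Matrix n n K) (B : Matrix m m K) (e : Option (Option m) ≃ n)
    (h1 : ∀ j, A (e none) (e j) = if j = some none then 1 else 0)
    (h2 : ∀ i, A (e i) (e none) = if i = some none then 1 else 0)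
    (h3 : ∀ i j, B i j = A (e (some (some i))) (e (some (some j)))) :
    A.rank = B.rank + 2 := by
  rw [← Matrix.rank_submatrix A e e, rank_option_pendant (A.submatrix e e) h1 h2]
  congr 2
  ext i j
  exact (h3 i j).symm

lemma rankIn_le {W : Type u} [Fintype W] (H : SimpleGraph W) (S : Finset W) :
    rankIn H S ≤ S.card := by
  classical
  unfold rankIn
  exact (Matrix.rank_le_card_width _).trans (by simp)

lemma rankIn_addPendant_map {V : Type u} [Fintype V] (G : SimpleGraph V) (u : V)
    (T : Finset V) :
    rankIn (addPendant G u) (T.map ⟨some, Option.some_injective V⟩) = rankIn G T := by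
  classical
  unfold rankIn
  set emb : V ↪ Option V := ⟨some, Option.some_injective V⟩ with hemb
  have hbij : Function.Bijective (fun a : {x // x ∈ T} =>
      (⟨some a.1, Finset.mem_map_of_mem emb a.2⟩ : {x // x ∈ T.map emb})) := by
    constructor
    · intro a b h
      exact Subtype.ext (Option.some_injective _ (congrArg Subtype.val h))
    · rintro ⟨x, hx⟩
      obtain ⟨a, ha, hax⟩ := Finset.mem_map.mp hx
      exact ⟨⟨a, ha⟩, Subtype.ext hax⟩
  refine (rank_eq_of_bij _ _ (Equiv.ofBijective _ hbij) fun i j => ?_).symm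
  simp only [Matrix.submatrix_apply, Equiv.ofBijective_apply, SimpleGraph.adjMatrix_apply]
  simp [addPendant_adj_some]

lemma rankIn_addPendant_insertNone {V : Type u} [Fintype V] [DecidableEq V]
    (G : SimpleGraph V) (u : V) (T : Finset {x : V // x ≠ u}) :
    rankIn (addPendant G u)
      (insert none (T.map ⟨fun x => some x.1, fun a b h =>
        Subtype.ext (Option.some_injective _ h)⟩)) = rankIn (delVert G u) T := by
  classical
  unfold rankIn
  set emb : {x : V // x ≠ u} ↪ Option V :=
    ⟨fun x => some x.1, fun a b h => Subtype.ext (Option.some_injective _ h)⟩ with hemb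
  set S : Finset (Option V) := insert none (T.map emb) with hS
  let f : Option {x // x ∈ T} → {x // x ∈ S} := fun o =>
    o.elim ⟨none, Finset.mem_insert_self _ _⟩
      (fun t => ⟨some t.1.1, Finset.mem_insert_of_mem (Finset.mem_map_of_mem emb t.2)⟩)
  have hbij : Function.Bijective f := by
    constructor
    · intro a b h
      have hv := congrArg Subtype.val h
      match a, b with
      | none, none => rfl
      | none, some t => simp [f] at hv
      | some t, none => simp [f] at hv
      | some t, some t' =>
        simp only [f, Option.elim] at hv
        exact congrArg some (Subtype.ext (Subtype.ext (Option.some_injective _ hv)))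
    · rintro ⟨x, hx⟩
      rcases Finset.mem_insert.mp hx with h | h
      · exact ⟨none, Subtype.ext h.symm⟩
      · obtain ⟨t, ht, htx⟩ := Finset.mem_map.mp h
        exact ⟨some ⟨t, ht⟩, Subtype.ext htx⟩
  refine rank_bij_zero _ _ (Equiv.ofBijective f hbij) ?_ ?_ ?_
  · intro j
    match j with
    | none =>
      simp [f, SimpleGraph.adjMatrix_apply]
    | some t =>
      simp [f, SimpleGraph.adjMatrix_apply, addPendant_adj_none, t.1.2]
  · intro i
    match i with
    | none =>
      simp [f, SimpleGraph.adjMatrix_apply]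
    | some t =>
      simp [f, SimpleGraph.adjMatrix_apply, addPendant_adj_none', t.1.2]
  · intro i j
    simp [f, SimpleGraph.adjMatrix_apply, addPendant_adj_some]
    simp [SimpleGraph.adjMatrix_apply, delVert]

lemma rankIn_addPendant_insertBoth {V : Type u} [Fintype V] [DecidableEq V]
    (G : SimpleGraph V) (u : V) (T : Finset {x : V // x ≠ u}) :
    rankIn (addPendant G u)
      (insert none (insert (some u) (T.map ⟨fun x => some x.1, fun a b h =>
        Subtype.ext (Option.some_injective _ h)⟩))) = rankIn (delVert G u) T + 2 := by
  classical
  unfold rankIn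
  set emb : {x : V // x ≠ u} ↪ Option V :=
    ⟨fun x => some x.1, fun a b h => Subtype.ext (Option.some_injective _ h)⟩ with hemb
  set S : Finset (Option V) := insert none (insert (some u) (T.map emb)) with hS
  let f : Option (Option {x // x ∈ T}) → {x // x ∈ S} := fun o =>
    o.elim ⟨none, Finset.mem_insert_self _ _⟩
      (fun o' => o'.elim ⟨some u, Finset.mem_insert_of_mem (Finset.mem_insert_self _ _)⟩
        (fun t => ⟨some t.1.1, Finset.mem_insert_of_mem
          (Finset.mem_insert_of_mem (Finset.mem_map_of_mem emb t.2))⟩))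
  have hbij : Function.Bijective f := by
    constructor
    · intro a b h
      have hv := congrArg Subtype.val h
      match a, b with
      | none, none => rfl
      | none, some none => simp [f] at hv
      | none, some (some t) => simp [f] at hv
      | some none, none => simp [f] at hv
      | some (some t), none => simp [f] at hv
      | some none, some none => rfl
      | some none, some (some t) =>
        simp only [f, Option.elim] at hv
        exact absurd (Option.some_injective _ hv).symm t.1.2
      | some (some t), some none =>
        simp only [f, Option.elim] at hv
        exact absurd (Option.some_injective _ hv) t.1.2
      | some (some t), some (some t') =>
        simp only [f, Option.elim] at hv
        exact congrArg some (congrArg some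
          (Subtype.ext (Subtype.ext (Option.some_injective _ hv))))
    · rintro ⟨x, hx⟩
      rcases Finset.mem_insert.mp hx with h | h
      · exact ⟨none, Subtype.ext h.symm⟩
      · rcases Finset.mem_insert.mp h with h' | h'
        · exact ⟨some none, Subtype.ext h'.symm⟩
        · obtain ⟨t, ht, htx⟩ := Finset.mem_map.mp h'
          exact ⟨some (some ⟨t, ht⟩), Subtype.ext htx⟩
  refine rank_bij_pendant _ _ (Equiv.ofBijective f hbij) ?_ ?_ ?_
  · intro j
    match j with
    | none =>
      simp [f, SimpleGraph.adjMatrix_apply]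
    | some none =>
      simp [f, SimpleGraph.adjMatrix_apply, addPendant_adj_none]
    | some (some t) =>
      simp [f, SimpleGraph.adjMatrix_apply, addPendant_adj_none, t.1.2]
  · intro i
    match i with
    | none =>
      simp [f, SimpleGraph.adjMatrix_apply]
    | some none =>
      simp [f, SimpleGraph.adjMatrix_apply, addPendant_adj_none']
    | some (some t) =>
      simp [f, SimpleGraph.adjMatrix_apply, addPendant_adj_none', t.1.2]
  · intro i j
    simp [f, SimpleGraph.adjMatrix_apply, addPendant_adj_some]
    simp [SimpleGraph.adjMatrix_apply, delVert]


/-- If `G'` results from adding a pendant vertex `w` to a vertex `u` of `G`, then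
`q_N(G';x) = q_N(G;x) + x·q_N(G - u;x)`. -/
theorem qNull_addPendant {V : Type u} [Fintype V] [DecidableEq V]
    (G : SimpleGraph V) (u : V) :
    qNull (addPendant G u) = qNull G + Polynomial.X * qNull (delVert G u) := by
  classical
  set embS : V ↪ Option V := ⟨some, Option.some_injective V⟩ with hembS
  set embU : {x : V // x ≠ u} ↪ V := Function.Embedding.subtype _ with hembU
  set embD : {x : V // x ≠ u} ↪ Option V :=
    ⟨fun x => some x.1, fun a b h => Subtype.ext (Option.some_injective _ h)⟩ with hembD
  have hUS : embU.trans embS = embD := by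
    ext x
    rfl
  have hcov1 : ∀ x : Option V, x ≠ none → ∃ b, embS b = x := by
    intro x hx
    cases x with
    | none => exact absurd rfl hx
    | some a => exact ⟨a, rfl⟩
  have hcov2 : ∀ x : V, x ≠ u → ∃ b : {x : V // x ≠ u}, embU b = x :=
    fun x hx => ⟨⟨x, hx⟩, rfl⟩
  have key := sum_split_finset embS none (fun b => by simp [hembS]) hcov1
    (fun S => ((X : Polynomial ℤ) - 1) ^ (S.card - rankIn (addPendant G u) S))
  rw [qNull, key, Finset.sum_add_distrib]
  have hpart1 : (∑ T : Finset V, ((X : Polynomial ℤ) - 1) ^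
      ((T.map embS).card - rankIn (addPendant G u) (T.map embS))) = qNull G := by
    rw [qNull]
    refine Finset.sum_congr rfl fun T _ => ?_
    rw [Finset.card_map, rankIn_addPendant_map]
  -- facts about non-membership
  have hnoneD : ∀ T : Finset {x : V // x ≠ u}, (none : Option V) ∉ T.map embD := by
    intro T h
    obtain ⟨t, -, ht⟩ := Finset.mem_map.mp h
    simp [hembD] at ht
  have hsomeuD : ∀ T : Finset {x : V // x ≠ u}, (some u : Option V) ∉ T.map embD := by
    intro T h
    obtain ⟨t, -, ht⟩ := Finset.mem_map.mp h
    exact t.2 (Option.some_injective _ ht)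
  have hrle : ∀ T : Finset {x : V // x ≠ u}, rankIn (delVert G u) T ≤ T.card :=
    fun T => rankIn_le _ T
  have key2 := sum_split_finset embU u (fun b => b.2) hcov2
    (fun T => ((X : Polynomial ℤ) - 1) ^
      ((insert none (T.map embS)).card - rankIn (addPendant G u) (insert none (T.map embS))))
  have hpart2 : (∑ T : Finset V, ((X : Polynomial ℤ) - 1) ^
      ((insert none (T.map embS)).card - rankIn (addPendant G u) (insert none (T.map embS))))
      = qNull (delVert G u) + (X - 1) * qNull (delVert G u) := by
    rw [key2, Finset.sum_add_distrib]
    congr 1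
    · -- the u ∈ S part : pendant case
      rw [qNull]
      refine Finset.sum_congr rfl fun T _ => ?_
      rw [Finset.map_insert, Finset.map_map, hUS]
      simp only [hembS, Function.Embedding.coeFn_mk]
      have hc : (insert (none : Option V) (insert (some u) (T.map embD))).card
          = T.card + 2 := by
        rw [Finset.card_insert_of_notMem, Finset.card_insert_of_notMem (hsomeuD T),
          Finset.card_map]
        intro h
        rcases Finset.mem_insert.mp h with h' | h'
        · exact absurd h' (by simp)
        · exact hnoneD T h'
      rw [hc, rankIn_addPendant_insertBoth]
      congr 1
      omega
    · -- the u ∉ S part : isolated-vertex case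
      rw [qNull, Finset.mul_sum]
      refine Finset.sum_congr rfl fun T _ => ?_
      rw [Finset.map_map, hUS]
      have hc : (insert (none : Option V) (T.map embD)).card = T.card + 1 := by
        rw [Finset.card_insert_of_notMem (hnoneD T), Finset.card_map]
      rw [hc, rankIn_addPendant_insertNone]
      have h1 : T.card + 1 - rankIn (delVert G u) T
          = (T.card - rankIn (delVert G u) T) + 1 := by
        have := hrle T
        omega
      rw [h1, pow_succ]
      ring
  rw [hpart1, hpart2]
  ring
end

section
/- Let H be a finite simple graph, let v be a vertex of H, and suppose the vertices of H other than v are partitioned into two nonempty sets A and B such that no edge of H joins a vertex of A to a vertex of B (so H is the one point join of H[A ∪ {v}] and H[B ∪ {v}] at v). Then H is a bipartite distance hereditary (BDH) graph if and only if both induced subgraphs H[A ∪ {v}] and H[B ∪ {v}] are BDH graphs. -/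
open Polynomial

universe u

variable {V : Type u}

section Aux
variable {W : Type u} {G : SimpleGraph W}

lemma addPendant_adj_ss {u a b : W} :
    (addPendant G u).Adj (some a) (some b) ↔ G.Adj a b := by
  simp only [addPendant, SimpleGraph.fromRel_adj]
  constructor
  · rintro ⟨hne, (⟨h, -⟩ | ⟨a', b', h1, h2, h3⟩) | (⟨h, -⟩ | ⟨a', b', h1, h2, h3⟩)⟩
    · exact absurd h (by simp)
    · cases h1; cases h2; exact h3
    · exact absurd h (by simp)
    · cases h1; cases h2; exact h3.symm
  · intro h
    exact ⟨by simpa using h.ne, Or.inl (Or.inr ⟨a, b, rfl, rfl, h⟩)⟩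

lemma addPendant_adj_ns {u a : W} :
    (addPendant G u).Adj none (some a) ↔ a = u := by
  simp only [addPendant, SimpleGraph.fromRel_adj]
  constructor
  · rintro ⟨hne, (⟨-, h⟩ | ⟨a', b', h1, -, -⟩) | (⟨h, -⟩ | ⟨a', b', h1, h2, -⟩)⟩
    · exact (Option.some_injective _ h.symm).symm ▸ rfl
    · exact absurd h1 (by simp)
    · exact absurd h (by simp)
    · exact absurd h2 (by simp)
  · rintro rfl
    exact ⟨by simp, Or.inl (Or.inl (by simp))⟩

lemma addPendant_adj_sn {u a : W} :
    (addPendant G u).Adj (some a) none ↔ a = u := by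
  rw [SimpleGraph.adj_comm]; exact addPendant_adj_ns

lemma addPendant_adj_nn {u : W} : ¬ (addPendant G u).Adj none none :=
  fun h => h.ne rfl

lemma addFalseTwin_adj_ss {t a b : W} :
    (addFalseTwin G t).Adj (some a) (some b) ↔ G.Adj a b := by
  simp only [addFalseTwin, SimpleGraph.fromRel_adj]
  constructor
  · rintro ⟨hne, (⟨a', h, -⟩ | ⟨a', b', h1, h2, h3⟩) | (⟨a', h, -⟩ | ⟨a', b', h1, h2, h3⟩)⟩
    · exact absurd h (by simp)
    · cases h1; cases h2; exact h3
    · exact absurd h (by simp)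
    · cases h1; cases h2; exact h3.symm
  · intro h
    exact ⟨by simpa using h.ne, Or.inl (Or.inr ⟨a, b, rfl, rfl, h⟩)⟩

lemma addFalseTwin_adj_ns {t a : W} :
    (addFalseTwin G t).Adj none (some a) ↔ G.Adj t a := by
  simp only [addFalseTwin, SimpleGraph.fromRel_adj]
  constructor
  · rintro ⟨hne, (⟨a', -, h2, h3⟩ | ⟨a', b', h1, -, -⟩) | (⟨a', h1, h2, -⟩ | ⟨a', b', h1, h2, -⟩)⟩
    · cases h2; exact h3
    · exact absurd h1 (by simp)
    · exact absurd h2 (by simp)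
    · exact absurd h2 (by simp)
  · intro h
    exact ⟨by simp, Or.inl (Or.inl ⟨a, by simp, by simp, h⟩)⟩

lemma addFalseTwin_adj_sn {t a : W} :
    (addFalseTwin G t).Adj (some a) none ↔ G.Adj t a := by
  rw [SimpleGraph.adj_comm]; exact addFalseTwin_adj_ns

lemma addFalseTwin_adj_nn {t : W} : ¬ (addFalseTwin G t).Adj none none :=
  fun h => h.ne rfl

end Aux

section Aux2
variable {W : Type u} {α : Type u} {β : Type u}

/-- `w` is a pendant vertex whose unique neighbour is `z`. -/
def IsPendantAt (G : SimpleGraph W) (w z : W) : Prop := ∀ x, G.Adj w x ↔ x = z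

/-- `w` is a false twin of `t`. -/
def IsTwinOf (G : SimpleGraph W) (w t : W) : Prop := w ≠ t ∧ ∀ x, G.Adj w x ↔ G.Adj t x

lemma IsPendantAt.adj {G : SimpleGraph W} {w z : W} (h : IsPendantAt G w z) : G.Adj w z :=
  (h z).mpr rfl

lemma IsPendantAt.ne {G : SimpleGraph W} {w z : W} (h : IsPendantAt G w z) : w ≠ z :=
  h.adj.ne

lemma IsTwinOf.not_adj {G : SimpleGraph W} {w t : W} (h : IsTwinOf G w t) : ¬ G.Adj w t :=
  fun ha => G.loopless.irrefl t ((h.2 t).mp ha)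

lemma IsPendantAt.map {G : SimpleGraph W} {K : SimpleGraph α} (e : G ≃g K) {w z : W}
    (h : IsPendantAt G w z) : IsPendantAt K (e w) (e z) := by
  intro x
  have hx : x = e (e.symm x) := (e.apply_symm_apply x).symm
  rw [hx, e.map_adj_iff, h, EmbeddingLike.apply_eq_iff_eq]

lemma IsTwinOf.map {G : SimpleGraph W} {K : SimpleGraph α} (e : G ≃g K) {w t : W}
    (h : IsTwinOf G w t) : IsTwinOf K (e w) (e t) := by
  refine ⟨fun he => h.1 (e.injective he), fun x => ?_⟩
  have hx : x = e (e.symm x) := (e.apply_symm_apply x).symm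
  rw [hx, e.map_adj_iff, e.map_adj_iff, h.2]

/-- Helper for building graph isomorphisms. -/
def mkIso (G : SimpleGraph α) (K : SimpleGraph β) (e : α ≃ β)
    (h : ∀ a b, K.Adj (e a) (e b) ↔ G.Adj a b) : G ≃g K :=
  ⟨e, h _ _⟩

/-- single-vertex graphs are BDH. -/
lemma isBDH_of_subsingleton (K : SimpleGraph α) (a : α) (hall : ∀ z : α, z = a) : IsBDH K := by
  refine IsBDH.iso _ _ IsBDH.single (mkIso _ _ ⟨fun _ => a, fun _ => PUnit.unit,
    fun x => rfl, fun x => (hall x).symm⟩ ?_)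
  intro x y
  simp only [SimpleGraph.bot_adj, iff_false]
  exact fun h => h.ne rfl

section Equivs

def eNone : W ≃ {o : Option W // o ≠ none} where
  toFun a := ⟨some a, Option.some_ne_none a⟩
  invFun o := match o with
    | ⟨some a, _⟩ => a
    | ⟨none, h⟩ => absurd rfl h
  left_inv a := rfl
  right_inv o := match o with
    | ⟨some _, _⟩ => rfl
    | ⟨none, h⟩ => absurd rfl h

def eSome (x : W) : Option {a : W // a ≠ x} ≃ {o : Option W // o ≠ some x} where
  toFun o := match o with
    | none => ⟨none, fun h => by cases h⟩
    | some a => ⟨some a.1, fun h => a.2 (Option.some_injective _ h)⟩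
  invFun o := match o with
    | ⟨none, _⟩ => none
    | ⟨some a, h⟩ => some ⟨a, fun he => h (by rw [he])⟩
  left_inv o := match o with
    | none => rfl
    | some _ => rfl
  right_inv o := match o with
    | ⟨none, _⟩ => rfl
    | ⟨some _, _⟩ => rfl

open Classical in
noncomputable def eFull (w : W) : Option {x : W // x ≠ w} ≃ W where
  toFun o := match o with
    | none => w
    | some a => a.1
  invFun y := if h : y = w then none else some ⟨y, h⟩
  left_inv o := match o with
    | none => by simp
    | some a => by simp [a.2]
  right_inv y := by by_cases h : y = w <;> simp [h]

open Classical in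
noncomputable def eRoot (t : W) : {o : Option W // o ≠ some t} ≃ W where
  toFun o := match o with
    | ⟨none, _⟩ => t
    | ⟨some a, _⟩ => a
  invFun a := if h : a = t then ⟨none, (Option.some_ne_none t).symm⟩ else ⟨some a, fun he => h (Option.some_injective _ he)⟩
  left_inv o := match o with
    | ⟨none, _⟩ => by simp
    | ⟨some a, h⟩ => by
        have ha : a ≠ t := fun he => h (by rw [he])
        simp [ha]
  right_inv a := by by_cases h : a = t <;> simp [h]

end Equivs

@[simp] lemma eNone_apply (a : W) : (eNone a : Option W) = some a := rfl
@[simp] lemma eSome_none (x : W) : ((eSome x) none : Option W) = none := rfl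
@[simp] lemma eSome_some (x : W) (a : {a : W // a ≠ x}) :
    ((eSome x) (some a) : Option W) = some a.1 := rfl
@[simp] lemma eFull_none (w : W) : eFull w none = w := rfl
@[simp] lemma eFull_some (w : W) (a : {x : W // x ≠ w}) : eFull w (some a) = a.1 := rfl
@[simp] lemma eRoot_none (t : W) (h : (none : Option W) ≠ some t) :
    eRoot t ⟨none, h⟩ = t := rfl
@[simp] lemma eRoot_some (t : W) (a : W) (h : (some a : Option W) ≠ some t) :
    eRoot t ⟨some a, h⟩ = a := rfl

@[simp] lemma delVert_adj {G : SimpleGraph W} {v : W} (a b : {x : W // x ≠ v}) :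
    (delVert G v).Adj a b ↔ G.Adj ↑a ↑b := Iff.rfl

@[simp] lemma inducedF_adj {V : Type u} {G : SimpleGraph V} {s : Finset V}
    (a b : {x : V // x ∈ s}) : (inducedF G s).Adj a b ↔ G.Adj ↑a ↑b := Iff.rfl

section Isos
variable {K : SimpleGraph W} {G : SimpleGraph W}

/-- re-attach a pendant vertex. -/
noncomputable def isoPendantDel {w z : W} (h : IsPendantAt K w z) :
    addPendant (delVert K w) ⟨z, h.ne.symm⟩ ≃g K := by
  refine mkIso _ _ (eFull w) ?_
  rintro (_ | a) (_ | b)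
  · simp [addPendant_adj_nn, fun h' : K.Adj w w => h'.ne rfl]
  · rw [eFull_none, eFull_some, addPendant_adj_ns, Subtype.ext_iff, h b.1]
  · rw [eFull_none, eFull_some, addPendant_adj_sn, Subtype.ext_iff,
      SimpleGraph.adj_comm, h a.1]
  · rw [eFull_some, eFull_some, addPendant_adj_ss, delVert_adj]

/-- re-attach a false twin. -/
noncomputable def isoTwinDel {w t : W} (h : IsTwinOf K w t) :
    addFalseTwin (delVert K w) ⟨t, Ne.symm h.1⟩ ≃g K := by
  refine mkIso _ _ (eFull w) ?_
  rintro (_ | a) (_ | b)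
  · simp [addFalseTwin_adj_nn, fun h' : K.Adj w w => h'.ne rfl]
  · rw [eFull_none, eFull_some, addFalseTwin_adj_ns, delVert_adj]
    exact h.2 b.1
  · rw [eFull_none, eFull_some, addFalseTwin_adj_sn, delVert_adj, SimpleGraph.adj_comm]
    exact h.2 a.1
  · rw [eFull_some, eFull_some, addFalseTwin_adj_ss, delVert_adj]

def isoDelNoneP (u : W) : G ≃g delVert (addPendant G u) none := by
  refine mkIso _ _ eNone ?_
  intro a b
  rw [delVert_adj]
  show (addPendant G u).Adj (some a) (some b) ↔ _
  exact addPendant_adj_ss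

def isoDelNoneT (t : W) : G ≃g delVert (addFalseTwin G t) none := by
  refine mkIso _ _ eNone ?_
  intro a b
  rw [delVert_adj]
  show (addFalseTwin G t).Adj (some a) (some b) ↔ _
  exact addFalseTwin_adj_ss

noncomputable def isoDelRootT (t : W) : delVert (addFalseTwin G t) (some t) ≃g G := by
  refine mkIso _ _ (eRoot t) ?_
  rintro ⟨(_ | a), ha⟩ ⟨(_ | b), hb⟩
  · rw [delVert_adj]
    simp [addFalseTwin_adj_nn, fun h' : G.Adj t t => h'.ne rfl]
  · rw [delVert_adj]
    exact (addFalseTwin_adj_ns).symm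
  · rw [delVert_adj]
    exact (SimpleGraph.adj_comm _ _ _).trans (addFalseTwin_adj_sn).symm
  · rw [delVert_adj]
    exact (addFalseTwin_adj_ss).symm

def isoCommP {u x : W} (hxu : x ≠ u) :
    addPendant (delVert G x) ⟨u, Ne.symm hxu⟩ ≃g delVert (addPendant G u) (some x) := by
  refine mkIso _ _ (eSome x) ?_
  rintro (_ | a) (_ | b)
  · rw [delVert_adj, eSome_none]
    simp [addPendant_adj_nn]
  · rw [delVert_adj, eSome_none, eSome_some, addPendant_adj_ns, addPendant_adj_ns,
      Subtype.ext_iff]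
  · rw [delVert_adj, eSome_none, eSome_some, addPendant_adj_sn, addPendant_adj_sn,
      Subtype.ext_iff]
  · rw [delVert_adj, eSome_some, eSome_some, addPendant_adj_ss, addPendant_adj_ss,
      delVert_adj]

def isoCommT {t x : W} (hxt : x ≠ t) :
    addFalseTwin (delVert G x) ⟨t, Ne.symm hxt⟩ ≃g delVert (addFalseTwin G t) (some x) := by
  refine mkIso _ _ (eSome x) ?_
  rintro (_ | a) (_ | b)
  · rw [delVert_adj, eSome_none]
    simp [addFalseTwin_adj_nn]
  · rw [delVert_adj, eSome_none, eSome_some, addFalseTwin_adj_ns, addFalseTwin_adj_ns,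
      delVert_adj]
  · rw [delVert_adj, eSome_none, eSome_some, addFalseTwin_adj_sn, addFalseTwin_adj_sn,
      delVert_adj]
  · rw [delVert_adj, eSome_some, eSome_some, addFalseTwin_adj_ss, addFalseTwin_adj_ss,
      delVert_adj]

def isoDelVert {K' : SimpleGraph α} (e : K ≃g K') (w : W) :
    delVert K w ≃g delVert K' (e w) := by
  refine mkIso _ _ (Equiv.subtypeEquiv e.toEquiv (fun a => ?_)) ?_
  · exact not_congr ⟨fun h' => h' ▸ rfl, fun h' => e.injective h'⟩
  · intro a b
    rw [delVert_adj, delVert_adj]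
    exact e.map_adj_iff

end Isos
end Aux2

section Aux3
variable {W : Type u} {α : Type u}

lemma reach_closed {G : SimpleGraph W} {C : Set W}
    (hC : ∀ a ∈ C, ∀ b, G.Adj a b → b ∈ C) :
    ∀ {x y : W}, x ∈ C → G.Walk x y → y ∈ C
  | _, _, hx, SimpleGraph.Walk.nil => hx
  | _, _, hx, SimpleGraph.Walk.cons h p => reach_closed hC (hC _ hx _ h) p

lemma exists_nbr {G : SimpleGraph W} (hc : G.Connected) {x y : W} (hxy : x ≠ y) :
    ∃ z, G.Adj x z := by
  obtain ⟨w⟩ := hc.preconnected x y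
  cases w with
  | nil => exact absurd rfl hxy
  | cons h _ => exact ⟨_, h⟩

lemma connected_of_iso {G : SimpleGraph W} {K : SimpleGraph α} (e : G ≃g K)
    (hG : G.Connected) : K.Connected := by
  haveI : Nonempty α := ⟨e hG.nonempty.some⟩
  refine SimpleGraph.Connected.mk fun x y => ?_
  have := (hG.preconnected (e.symm x) (e.symm y)).map e.toHom
  simpa using this

lemma connected_addPendant {G : SimpleGraph W} (hG : G.Connected) (u : W) :
    (addPendant G u).Connected := by
  have hmap : ∀ a b : W, (addPendant G u).Reachable (some a) (some b) := fun a b =>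
    (hG.preconnected a b).map ⟨some, fun hab => addPendant_adj_ss.mpr hab⟩
  have hnone : ∀ a : W, (addPendant G u).Reachable none (some a) := fun a =>
    ((addPendant_adj_ns.mpr rfl : (addPendant G u).Adj none (some u)).reachable).trans
      (hmap u a)
  haveI : Nonempty (Option W) := ⟨none⟩
  refine SimpleGraph.Connected.mk ?_
  rintro (_ | a) (_ | b)
  · rfl
  · exact hnone b
  · exact (hnone a).symm
  · exact hmap a b

lemma connected_addFalseTwin {G : SimpleGraph W} (hG : G.Connected) (t : W)
    (hv : ∃ x, G.Adj t x) : (addFalseTwin G t).Connected := by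
  obtain ⟨y0, hy0⟩ := hv
  have hmap : ∀ a b : W, (addFalseTwin G t).Reachable (some a) (some b) := fun a b =>
    (hG.preconnected a b).map ⟨some, fun hab => addFalseTwin_adj_ss.mpr hab⟩
  have hnone : ∀ a : W, (addFalseTwin G t).Reachable none (some a) := fun a =>
    ((addFalseTwin_adj_ns.mpr hy0 : (addFalseTwin G t).Adj none (some y0)).reachable).trans
      (hmap y0 a)
  haveI : Nonempty (Option W) := ⟨none⟩
  refine SimpleGraph.Connected.mk ?_
  rintro (_ | a) (_ | b)
  · rfl
  · exact hnone b
  · exact (hnone a).symm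
  · exact hmap a b

lemma conn_of_isBDH {G : SimpleGraph W} (hG : IsBDH G) : G.Connected := by
  induction hG with
  | single =>
    haveI : Nonempty PUnit.{u+1} := ⟨PUnit.unit⟩
    exact SimpleGraph.Connected.mk fun x y => by rw [Subsingleton.elim x y]
  | pendant G u hG ih => exact connected_addPendant ih u
  | falseTwin G t hv hG ih => exact connected_addFalseTwin ih t hv
  | iso G K hG e ih => exact connected_of_iso e ih

theorem isBDH_del {G : SimpleGraph W} (hG : IsBDH G) :
    ∀ (w : W), ((∃ z, IsPendantAt G w z) ∨ (∃ t, IsTwinOf G w t)) → IsBDH (delVert G w) := by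
  induction hG with
  | single =>
    intro w hw
    rcases hw with ⟨z, hz⟩ | ⟨t, ht⟩
    · exact absurd hz.adj (by simp)
    · exact absurd (Subsingleton.elim w t) ht.1
  | pendant G u hG ih =>
    rintro (_ | x) hw
    · exact IsBDH.iso _ _ hG (isoDelNoneP u)
    by_cases hxu : x = u
    · subst hxu
      rcases hw with ⟨z, hz⟩ | ⟨t, ht⟩
      · have hz' : z = none :=
          ((hz none).mp (addPendant_adj_sn.mpr rfl)).symm
        subst hz'
        have hno : ∀ a, ¬ G.Adj x a := by
          intro a ha
          exact Option.some_ne_none a ((hz (some a)).mp (addPendant_adj_ss.mpr ha))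
        have hall : ∀ a, a = x := by
          intro a
          by_contra hne
          obtain ⟨y, hy⟩ := exists_nbr (conn_of_isBDH hG) (Ne.symm hne)
          exact hno y hy
        refine isBDH_of_subsingleton _ ⟨none, by simp⟩ ?_
        rintro ⟨(_ | a), ho⟩
        · rfl
        · exact absurd (congrArg some (hall a)) ho
      · have h2 : (addPendant G x).Adj t none :=
          (ht.2 none).mp (addPendant_adj_sn.mpr rfl)
        cases t with
        | none => exact absurd h2 (fun h => h.ne rfl)
        | some b => exact absurd (congrArg some (addPendant_adj_sn.mp h2)) (Ne.symm ht.1)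
    · have hstr : (∃ z, IsPendantAt G x z) ∨ (∃ t, IsTwinOf G x t) := by
        rcases hw with ⟨z, hz⟩ | ⟨t, ht⟩
        · cases z with
          | none => exact absurd (addPendant_adj_sn.mp ((hz none).mpr rfl)) hxu
          | some z' =>
            refine Or.inl ⟨z', fun a => ⟨fun ha => ?_, fun ha => ?_⟩⟩
            · exact Option.some_injective _ ((hz (some a)).mp (addPendant_adj_ss.mpr ha))
            · subst ha
              exact addPendant_adj_ss.mp ((hz (some a)).mpr rfl)
        · cases t with
          | none =>
            refine Or.inl ⟨u, fun a => ?_⟩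
            have h3 := ht.2 (some a)
            rw [addPendant_adj_ss, addPendant_adj_ns] at h3
            exact h3
          | some t' =>
            refine Or.inr ⟨t', ⟨fun he => ht.1 (by rw [he]), fun a => ?_⟩⟩
            have h3 := ht.2 (some a)
            rw [addPendant_adj_ss, addPendant_adj_ss] at h3
            exact h3
      exact IsBDH.iso _ _ (IsBDH.pendant _ _ (ih x hstr)) (isoCommP hxu)
  | falseTwin G t0 hv hG ih =>
    rintro (_ | x) hw
    · exact IsBDH.iso _ _ hG (isoDelNoneT t0)
    by_cases hxt : x = t0
    · subst hxt
      exact IsBDH.iso _ _ hG (isoDelRootT x).symm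
    · rcases hw with ⟨z, hz⟩ | ⟨t, ht⟩
      · have hnadj : ¬ G.Adj t0 x := by
          intro had
          have e1 := (hz none).mp (addFalseTwin_adj_sn.mpr had)
          have e2 := (hz (some t0)).mp (addFalseTwin_adj_ss.mpr had.symm)
          exact Option.some_ne_none t0 (e1.trans e2.symm).symm
        cases z with
        | none =>
          exact absurd (addFalseTwin_adj_sn.mp ((hz none).mpr rfl)) hnadj
        | some z' =>
          have hp : IsPendantAt G x z' := by
            refine fun a => ⟨fun ha => ?_, fun ha => ?_⟩
            · exact Option.some_injective _ ((hz (some a)).mp (addFalseTwin_adj_ss.mpr ha))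
            · subst ha
              exact addFalseTwin_adj_ss.mp ((hz (some a)).mpr rfl)
          obtain ⟨y0, hy0⟩ := hv
          have hy0x : y0 ≠ x := fun he => hnadj (he ▸ hy0)
          exact IsBDH.iso _ _
            (IsBDH.falseTwin (delVert G x) ⟨t0, Ne.symm hxt⟩ ⟨⟨y0, hy0x⟩, hy0⟩
              (ih x (Or.inl ⟨z', hp⟩))) (isoCommT hxt)
      · cases t with
        | none =>
          have hxnt0adj : ¬ G.Adj x t0 := fun h =>
            ht.not_adj (addFalseTwin_adj_sn.mpr h.symm)
          have htw : IsTwinOf G x t0 := by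
            refine ⟨hxt, fun a => ?_⟩
            have h3 := ht.2 (some a)
            rw [addFalseTwin_adj_ss, addFalseTwin_adj_ns] at h3
            exact h3
          obtain ⟨y0, hy0⟩ := hv
          have hy0x : y0 ≠ x := by
            intro he
            subst he
            exact hxnt0adj hy0.symm
          exact IsBDH.iso _ _
            (IsBDH.falseTwin (delVert G x) ⟨t0, Ne.symm hxt⟩ ⟨⟨y0, hy0x⟩, hy0⟩
              (ih x (Or.inr ⟨t0, htw⟩))) (isoCommT hxt)
        | some t' =>
          have htw : IsTwinOf G x t' := by
            refine ⟨fun he => ht.1 (by rw [he]), fun a => ?_⟩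
            have h3 := ht.2 (some a)
            rw [addFalseTwin_adj_ss, addFalseTwin_adj_ss] at h3
            exact h3
          have hdel := ih x (Or.inr ⟨t', htw⟩)
          obtain ⟨y0, hy0⟩ := hv
          by_cases hyx : y0 = x
          · have hxadj : G.Adj x t0 := hyx ▸ hy0.symm
            have ht'adj : G.Adj t' t0 := (htw.2 t0).mp hxadj
            have ht'x : t' ≠ x := fun he => ht.1 (by rw [he])
            exact IsBDH.iso _ _
              (IsBDH.falseTwin (delVert G x) ⟨t0, Ne.symm hxt⟩ ⟨⟨t', ht'x⟩, ht'adj.symm⟩ hdel)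
              (isoCommT hxt)
          · exact IsBDH.iso _ _
              (IsBDH.falseTwin (delVert G x) ⟨t0, Ne.symm hxt⟩ ⟨⟨y0, hyx⟩, hy0⟩ hdel)
              (isoCommT hxt)
  | iso G K hG e ih =>
    intro w hw
    have hw' : (∃ z, IsPendantAt G (e.symm w) z) ∨ ∃ t, IsTwinOf G (e.symm w) t := by
      rcases hw with ⟨z, hz⟩ | ⟨t, ht⟩
      · exact Or.inl ⟨e.symm z, hz.map e.symm⟩
      · exact Or.inr ⟨e.symm t, ht.map e.symm⟩
    have h1 := isoDelVert e (e.symm w)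
    rw [e.apply_symm_apply w] at h1
    exact IsBDH.iso _ _ (ih (e.symm w) hw') h1
end Aux3

section Aux4
variable {W : Type u}

lemma IsTwinOf.symm {G : SimpleGraph W} {w t : W} (h : IsTwinOf G w t) : IsTwinOf G t w :=
  ⟨h.1.symm, fun x => (h.2 x).symm⟩

/-- Every BDH graph with at least two vertices has, for any given vertex `r`, a vertex
`w ≠ r` which is pendant with attachment `≠ r`, or has a false twin `≠ r`, or forms
a mutual pendant pair with `r` (i.e. the graph is `K₂`). -/
theorem avoid {K : SimpleGraph W} (hK : IsBDH K) :
    ∀ (x0 y0 : W), x0 ≠ y0 → ∀ r : W,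
    ∃ w, w ≠ r ∧ ((∃ z, z ≠ r ∧ IsPendantAt K w z) ∨ (∃ t, t ≠ r ∧ IsTwinOf K w t) ∨
      (IsPendantAt K w r ∧ IsPendantAt K r w)) := by
  induction hK with
  | single =>
    intro x0 y0 hxy r
    exact absurd (Subsingleton.elim x0 y0) hxy
  | pendant G u hG ih =>
    intro x0 y0 hxy r
    have liftP : ∀ {w z}, w ≠ u → IsPendantAt G w z →
        IsPendantAt (addPendant G u) (some w) (some z) := by
      intro w z hwu h
      rintro (_ | a)
      · rw [addPendant_adj_sn]
        simp [hwu]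
      · rw [addPendant_adj_ss, Option.some_inj]
        exact h a
    have liftT : ∀ {w t}, w ≠ u → t ≠ u → IsTwinOf G w t →
        IsTwinOf (addPendant G u) (some w) (some t) := by
      intro w t hwu htu h
      refine ⟨fun he => h.1 (Option.some_injective _ he), ?_⟩
      rintro (_ | a)
      · rw [addPendant_adj_sn, addPendant_adj_sn]
        simp [hwu, htu]
      · rw [addPendant_adj_ss, addPendant_adj_ss]
        exact h.2 a
    cases r with
    | some x =>
      by_cases hxu : x = u
      · subst hxu
        by_cases hadj : ∃ a, G.Adj x a
        · obtain ⟨a0, ha0⟩ := hadj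
          obtain ⟨w, hwu, hcases⟩ := ih x a0 ha0.ne x
          rcases hcases with ⟨z, hzu, hp⟩ | ⟨t, htu, htw⟩ | ⟨hp1, hp2⟩
          · exact ⟨some w, by simpa using hwu, Or.inl ⟨some z, by simpa using hzu,
              liftP hwu hp⟩⟩
          · exact ⟨some w, by simpa using hwu, Or.inr (Or.inl ⟨some t, by simpa using htu,
              liftT hwu htu htw⟩)⟩
          · have htww : IsTwinOf (addPendant G x) (some w) none := by
              refine ⟨by simp, ?_⟩
              rintro (_ | a)
              · rw [addPendant_adj_sn]
                simp [addPendant_adj_nn, hwu]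
              · rw [addPendant_adj_ss, addPendant_adj_ns]
                exact hp1 a
            exact ⟨some w, by simpa using hwu, Or.inr (Or.inl ⟨none, by simp, htww⟩)⟩
        · push_neg at hadj
          refine ⟨none, by simp, Or.inr (Or.inr ⟨?_, ?_⟩)⟩
          · rintro (_ | a)
            · simp [addPendant_adj_nn]
            · rw [addPendant_adj_ns, Option.some_inj]
          · rintro (_ | a)
            · rw [addPendant_adj_sn]
              simp
            · rw [addPendant_adj_ss]
              simp [hadj a]
      · refine ⟨none, by simp, Or.inl ⟨some u,
          fun he => hxu (Option.some_injective _ he).symm, ?_⟩⟩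
        rintro (_ | a)
        · simp [addPendant_adj_nn]
        · rw [addPendant_adj_ns, Option.some_inj]
    | none =>
      by_cases hW : ∃ a, a ≠ u
      · obtain ⟨a1, ha1⟩ := hW
        obtain ⟨w, hwu, hcases⟩ := ih a1 u ha1 u
        rcases hcases with ⟨z, hzu, hp⟩ | ⟨t, htu, htw⟩ | ⟨hp1, hp2⟩
        · exact ⟨some w, by simp, Or.inl ⟨some z, by simp, liftP hwu hp⟩⟩
        · exact ⟨some w, by simp, Or.inr (Or.inl ⟨some t, by simp, liftT hwu htu htw⟩)⟩
        · exact ⟨some w, by simp, Or.inl ⟨some u, by simp, liftP hwu hp1⟩⟩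
      · push_neg at hW
        refine ⟨some u, by simp, Or.inr (Or.inr ⟨?_, ?_⟩)⟩
        · rintro (_ | a)
          · rw [addPendant_adj_sn]
            simp
          · rw [addPendant_adj_ss]
            rw [hW a]
            simp [SimpleGraph.irrefl]
        · rintro (_ | a)
          · simp [addPendant_adj_nn]
          · rw [addPendant_adj_ns, Option.some_inj]
  | falseTwin G t0 hv hG ih =>
    intro x0 y0 hxy r
    have liftP : ∀ {w z}, ¬ G.Adj t0 w → IsPendantAt G w z →
        IsPendantAt (addFalseTwin G t0) (some w) (some z) := by
      intro w z hnadj h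
      rintro (_ | a)
      · rw [addFalseTwin_adj_sn]
        simp [hnadj]
      · rw [addFalseTwin_adj_ss, Option.some_inj]
        exact h a
    have liftT : ∀ {w t}, IsTwinOf G w t →
        IsTwinOf (addFalseTwin G t0) (some w) (some t) := by
      intro w t h
      refine ⟨fun he => h.1 (Option.some_injective _ he), ?_⟩
      rintro (_ | a)
      · rw [addFalseTwin_adj_sn, addFalseTwin_adj_sn]
        constructor
        · intro h'; exact ((h.2 t0).mp h'.symm).symm
        · intro h'; exact ((h.2 t0).mpr h'.symm).symm
      · rw [addFalseTwin_adj_ss, addFalseTwin_adj_ss]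
        exact h.2 a
    have hpair : IsTwinOf (addFalseTwin G t0) none (some t0) := by
      refine ⟨by simp, ?_⟩
      rintro (_ | a)
      · rw [addFalseTwin_adj_sn]
        simp [addFalseTwin_adj_nn, SimpleGraph.irrefl]
      · rw [addFalseTwin_adj_ns, addFalseTwin_adj_ss]
    by_cases hr : r = none ∨ r = some t0
    · obtain ⟨y1, hy1⟩ := hv
      by_cases hsing : ∀ y, G.Adj t0 y → y = y1
      · rcases hr with rfl | rfl
        · refine ⟨some t0, by simp, Or.inl ⟨some y1, by simp, ?_⟩⟩
          rintro (_ | a)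
          · rw [addFalseTwin_adj_sn]
            simp [SimpleGraph.irrefl]
          · rw [addFalseTwin_adj_ss, Option.some_inj]
            exact ⟨fun h' => hsing a h', fun h' => h' ▸ hy1⟩
        · refine ⟨none, by simp, Or.inl ⟨some y1,
            fun he => hy1.ne (Option.some_injective _ he).symm, ?_⟩⟩
          rintro (_ | a)
          · simp [addFalseTwin_adj_nn]
          · rw [addFalseTwin_adj_ns, Option.some_inj]
            exact ⟨fun h' => hsing a h', fun h' => h' ▸ hy1⟩
      · push_neg at hsing
        obtain ⟨y2, hy2, hy2ne⟩ := hsing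
        obtain ⟨w, hwt0, hcases⟩ := ih t0 y1 hy1.ne t0
        have main : ∃ w, (w ≠ none ∧ w ≠ some t0) ∧
            ((∃ z, (z ≠ none ∧ z ≠ some t0) ∧ IsPendantAt (addFalseTwin G t0) w z) ∨
             (∃ t, (t ≠ none ∧ t ≠ some t0) ∧ IsTwinOf (addFalseTwin G t0) w t)) := by
          rcases hcases with ⟨z, hzt0, hp⟩ | ⟨t, htt0, htw⟩ | ⟨hp1, hp2⟩
          · have hnadj : ¬ G.Adj t0 w := fun h' => hzt0 ((hp t0).mp h'.symm).symm
            exact ⟨some w, ⟨by simp, by simpa using hwt0⟩,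
              Or.inl ⟨some z, ⟨by simp, by simpa using hzt0⟩, liftP hnadj hp⟩⟩
          · exact ⟨some w, ⟨by simp, by simpa using hwt0⟩,
              Or.inr ⟨some t, ⟨by simp, by simpa using htt0⟩, liftT htw⟩⟩
          · exact absurd (((hp2 y1).mp hy1).trans ((hp2 y2).mp hy2).symm) (Ne.symm hy2ne)
        obtain ⟨w, ⟨hw1, hw2⟩, hcs⟩ := main
        rcases hr with rfl | rfl
        · rcases hcs with ⟨z, hz, hp⟩ | ⟨t, ht, htw⟩
          · exact ⟨w, hw1, Or.inl ⟨z, hz.1, hp⟩⟩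
          · exact ⟨w, hw1, Or.inr (Or.inl ⟨t, ht.1, htw⟩)⟩
        · rcases hcs with ⟨z, hz, hp⟩ | ⟨t, ht, htw⟩
          · exact ⟨w, hw2, Or.inl ⟨z, hz.2, hp⟩⟩
          · exact ⟨w, hw2, Or.inr (Or.inl ⟨t, ht.2, htw⟩)⟩
    · push_neg at hr
      exact ⟨none, Ne.symm hr.1, Or.inr (Or.inl ⟨some t0, Ne.symm hr.2, hpair⟩)⟩
  | iso G K hG e ih =>
    intro x0 y0 hxy r
    obtain ⟨w, hwr, hcases⟩ := ih (e.symm x0) (e.symm y0)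
      (fun he => hxy (by
        have := congrArg e he
        simpa using this)) (e.symm r)
    have keyne : ∀ a : _, e a = r → a = e.symm r := by
      intro a ha
      rw [← ha]
      exact (e.symm_apply_apply a).symm
    refine ⟨e w, fun he => hwr (keyne w he), ?_⟩
    rcases hcases with ⟨z, hz, hp⟩ | ⟨t, ht, htw⟩ | ⟨h1, h2⟩
    · exact Or.inl ⟨e z, fun he => hz (keyne z he), hp.map e⟩
    · exact Or.inr (Or.inl ⟨e t, fun he => ht (keyne t he), htw.map e⟩)
    · have h1' := h1.map e
      have h2' := h2.map e
      rw [e.apply_symm_apply] at h1' h2'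
      exact Or.inr (Or.inr ⟨h1', h2'⟩)
end Aux4

section Aux5
variable {V' : Type u} [DecidableEq V'] (H : SimpleGraph V')

def indUniv [Fintype V'] : inducedF H Finset.univ ≃g H :=
  mkIso _ _ (Equiv.subtypeUnivEquiv (fun x => Finset.mem_univ x)) (fun _ _ => Iff.rfl)

def indErase (S : Finset V') (w : V') (hw : w ∈ S) :
    delVert (inducedF H S) ⟨w, hw⟩ ≃g inducedF H (S.erase w) := by
  refine mkIso _ _ ⟨fun x => ⟨↑↑x, Finset.mem_erase.mpr
      ⟨fun he => x.2 (Subtype.ext he), x.1.2⟩⟩,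
    fun y => ⟨⟨↑y, (Finset.mem_erase.mp y.2).2⟩,
      fun he => (Finset.mem_erase.mp y.2).1 (congrArg Subtype.val he)⟩, ?_, ?_⟩ ?_
  · intro x
    exact Subtype.ext (Subtype.ext rfl)
  · intro y
    exact Subtype.ext rfl
  · intro a b
    exact Iff.rfl

variable {H}

lemma pendant_up {S T : Finset V'} (hTS : T ⊆ S) {w z : V'} (hw : w ∈ T) (hz : z ∈ T)
    (hcl : ∀ x ∈ S, H.Adj w x → x ∈ T)
    (h : IsPendantAt (inducedF H T) ⟨w, hw⟩ ⟨z, hz⟩) :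
    IsPendantAt (inducedF H S) ⟨w, hTS hw⟩ ⟨z, hTS hz⟩ := by
  rintro ⟨x, hxS⟩
  constructor
  · intro hadj
    have hxT : x ∈ T := hcl x hxS hadj
    have hval : x = z := congrArg Subtype.val ((h ⟨x, hxT⟩).mp hadj)
    exact Subtype.ext hval
  · intro he
    have hx : x = z := congrArg Subtype.val he
    subst hx
    exact (h ⟨x, hz⟩).mpr rfl

lemma pendant_down {S T : Finset V'} (hTS : T ⊆ S) {w z : V'} (hw : w ∈ T) (hz : z ∈ T)
    (h : IsPendantAt (inducedF H S) ⟨w, hTS hw⟩ ⟨z, hTS hz⟩) :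
    IsPendantAt (inducedF H T) ⟨w, hw⟩ ⟨z, hz⟩ := by
  rintro ⟨x, hxT⟩
  constructor
  · intro hadj
    have hval : x = z := congrArg Subtype.val ((h ⟨x, hTS hxT⟩).mp hadj)
    exact Subtype.ext hval
  · intro he
    have hx : x = z := congrArg Subtype.val he
    subst hx
    exact (h ⟨x, hTS hxT⟩).mpr rfl

lemma twin_up {S T : Finset V'} (hTS : T ⊆ S) {w t : V'} (hw : w ∈ T) (ht : t ∈ T)
    (hclw : ∀ x ∈ S, H.Adj w x → x ∈ T) (hclt : ∀ x ∈ S, H.Adj t x → x ∈ T)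
    (h : IsTwinOf (inducedF H T) ⟨w, hw⟩ ⟨t, ht⟩) :
    IsTwinOf (inducedF H S) ⟨w, hTS hw⟩ ⟨t, hTS ht⟩ := by
  refine ⟨fun he => h.1 (Subtype.ext (show w = t from congrArg Subtype.val he)), ?_⟩
  rintro ⟨x, hxS⟩
  by_cases hxT : x ∈ T
  · exact h.2 ⟨x, hxT⟩
  · exact ⟨fun hadj => absurd (hclw x hxS hadj) hxT,
      fun hadj => absurd (hclt x hxS hadj) hxT⟩

lemma twin_down {S T : Finset V'} (hTS : T ⊆ S) {w t : V'} (hw : w ∈ T) (ht : t ∈ T)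
    (h : IsTwinOf (inducedF H S) ⟨w, hTS hw⟩ ⟨t, hTS ht⟩) :
    IsTwinOf (inducedF H T) ⟨w, hw⟩ ⟨t, ht⟩ := by
  refine ⟨fun he => h.1 (Subtype.ext (show w = t from congrArg Subtype.val he)), ?_⟩
  rintro ⟨x, hxT⟩
  exact h.2 ⟨x, hTS hxT⟩
end Aux5

section Aux6
variable {V' : Type u} [DecidableEq V']

/-- Backward step: if both pieces are BDH then the one point join is BDH. -/
lemma keyB (H : SimpleGraph V') (S : Finset V') (v : V')
    (ih : ∀ S' : Finset V', S'.card < S.card → ∀ (A B : Finset V'),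
      A.Nonempty → B.Nonempty → Disjoint A B → A ∪ B = S'.erase v → v ∈ S' →
      (∀ a ∈ A, ∀ b ∈ B, ¬ H.Adj a b) →
      (IsBDH (inducedF H S') ↔
        IsBDH (inducedF H (insert v A)) ∧ IsBDH (inducedF H (insert v B))))
    (hvS : v ∈ S) (A B : Finset V') (hA : A.Nonempty) (hB : B.Nonempty)
    (hdisj : Disjoint A B) (hpart : A ∪ B = S.erase v)
    (hsep : ∀ a ∈ A, ∀ b ∈ B, ¬ H.Adj a b)
    (h1 : IsBDH (inducedF H (insert v A))) (h2 : IsBDH (inducedF H (insert v B))) :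
    IsBDH (inducedF H S) := by
  classical
  have hvB : v ∉ B := by
    intro h
    have : v ∈ S.erase v := hpart ▸ Finset.mem_union_right A h
    exact (Finset.mem_erase.mp this).1 rfl
  have hvA : v ∉ A := by
    intro h
    have : v ∈ S.erase v := hpart ▸ Finset.mem_union_left B h
    exact (Finset.mem_erase.mp this).1 rfl
  have hBS : B ⊆ S := fun b hb =>
    Finset.mem_of_mem_erase (hpart ▸ Finset.mem_union_right A hb)
  have hAS : A ⊆ S := fun a ha =>
    Finset.mem_of_mem_erase (hpart ▸ Finset.mem_union_left B ha)
  have hiBS : insert v B ⊆ S := Finset.insert_subset_iff.mpr ⟨hvS, hBS⟩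
  have hABmem : ∀ x ∈ S, x = v ∨ x ∈ A ∨ x ∈ B := by
    intro x hx
    by_cases hxv : x = v
    · exact Or.inl hxv
    · have : x ∈ A ∪ B := hpart ▸ Finset.mem_erase.mpr ⟨hxv, hx⟩
      exact Or.inr (Finset.mem_union.mp this)
  have hclB : ∀ w ∈ B, ∀ x ∈ S, H.Adj w x → x ∈ insert v B := by
    intro w hw x hx hadj
    rcases hABmem x hx with rfl | hxA | hxB
    · exact Finset.mem_insert_self _ _
    · exact absurd hadj.symm (hsep x hxA w hw)
    · exact Finset.mem_insert_of_mem hxB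
  obtain ⟨b0, hb0⟩ := hB
  have hvb0 : v ≠ b0 := fun he => hvB (he ▸ hb0)
  obtain ⟨⟨w, hwvB⟩, hw'v, hcases⟩ := avoid h2 ⟨v, Finset.mem_insert_self v B⟩
    ⟨b0, Finset.mem_insert_of_mem hb0⟩
    (fun he => hvb0 (congrArg Subtype.val he)) ⟨v, Finset.mem_insert_self v B⟩
  have hwB : w ∈ B := by
    rcases Finset.mem_insert.mp hwvB with rfl | h
    · exact absurd (Subtype.ext rfl) hw'v
    · exact h
  have hwS : w ∈ S := hBS hwB
  have hvw : v ≠ w := fun he => hvB (he ▸ hwB)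
  have hstr2 : (∃ z', IsPendantAt (inducedF H (insert v B)) ⟨w, hwvB⟩ z') ∨
      (∃ t', t' ≠ (⟨v, Finset.mem_insert_self v B⟩ : {x // x ∈ insert v B}) ∧
        IsTwinOf (inducedF H (insert v B)) ⟨w, hwvB⟩ t') := by
    rcases hcases with ⟨z, _, hp⟩ | ⟨t, ht, htw⟩ | ⟨hp1, _⟩
    · exact Or.inl ⟨z, hp⟩
    · exact Or.inr ⟨t, ht, htw⟩
    · exact Or.inl ⟨_, hp1⟩
  -- facts for the recursive call (when `B.erase w` is nonempty)
  have hcard' : (S.erase w).card < S.card := Finset.card_erase_lt_of_mem hwS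
  have hpart' : A ∪ B.erase w = (S.erase w).erase v := by
    ext x
    simp only [Finset.mem_union, Finset.mem_erase]
    constructor
    · rintro (hxA | ⟨hxw, hxB⟩)
      · have hx : x ∈ S.erase v := hpart ▸ Finset.mem_union_left B hxA
        exact ⟨(Finset.mem_erase.mp hx).1,
          fun he => Finset.disjoint_left.mp hdisj hxA (he ▸ hwB), (Finset.mem_erase.mp hx).2⟩
      · have hx : x ∈ S.erase v := hpart ▸ Finset.mem_union_right A hxB
        exact ⟨(Finset.mem_erase.mp hx).1, hxw, (Finset.mem_erase.mp hx).2⟩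
    · rintro ⟨hxv, hxw, hxS⟩
      rcases hABmem x hxS with rfl | hxA | hxB
      · exact absurd rfl hxv
      · exact Or.inl hxA
      · exact Or.inr ⟨hxw, hxB⟩
  have hvSw : v ∈ S.erase w := Finset.mem_erase.mpr ⟨hvw, hvS⟩
  have hsep' : ∀ a ∈ A, ∀ b ∈ B.erase w, ¬ H.Adj a b := fun a ha b hb =>
    hsep a ha b (Finset.mem_of_mem_erase hb)
  have hset : insert v (B.erase w) = (insert v B).erase w := by
    ext x
    simp only [Finset.mem_insert, Finset.mem_erase]
    constructor
    · rintro (rfl | ⟨hxw, hxB⟩)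
      · exact ⟨hvw, Or.inl rfl⟩
      · exact ⟨hxw, Or.inr hxB⟩
    · rintro ⟨hxw, (rfl | hxB)⟩
      · exact Or.inl rfl
      · exact Or.inr ⟨hxw, hxB⟩
  rcases hstr2 with ⟨⟨z, hzvB⟩, hp⟩ | ⟨⟨t, htvB⟩, htv, htw⟩
  · -- pendant case
    have hclw := hclB w hwB
    have hpS : IsPendantAt (inducedF H S) ⟨w, hiBS hwvB⟩ ⟨z, hiBS hzvB⟩ :=
      pendant_up hiBS hwvB hzvB hclw hp
    have hdel2 : IsBDH (inducedF H ((insert v B).erase w)) :=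
      IsBDH.iso _ _ (isBDH_del h2 ⟨w, hwvB⟩ (Or.inl ⟨⟨z, hzvB⟩, hp⟩))
        (indErase H (insert v B) w hwvB)
    have hSd : IsBDH (inducedF H (S.erase w)) := by
      by_cases hBe : (B.erase w).Nonempty
      · refine (ih (S.erase w) hcard' A (B.erase w) hA hBe
          (hdisj.mono_right (Finset.erase_subset _ _)) hpart' hvSw hsep').mpr ⟨h1, ?_⟩
        rw [hset]
        exact hdel2
      · have hBw : B = {w} := by
          apply Finset.eq_singleton_iff_unique_mem.mpr
          refine ⟨hwB, fun x hx => ?_⟩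
          by_contra hne
          exact hBe ⟨x, Finset.mem_erase.mpr ⟨hne, hx⟩⟩
        have hSeq : S.erase w = insert v A := by
          ext x
          simp only [Finset.mem_erase, Finset.mem_insert]
          constructor
          · rintro ⟨hxw, hxS⟩
            rcases hABmem x hxS with rfl | hxA | hxB
            · exact Or.inl rfl
            · exact Or.inr hxA
            · rw [hBw, Finset.mem_singleton] at hxB
              exact absurd hxB hxw
          · rintro (rfl | hxA)
            · exact ⟨hvw, hvS⟩
            · exact ⟨fun he => Finset.disjoint_left.mp hdisj hxA (he ▸ hwB), hAS hxA⟩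
        rw [hSeq]
        exact h1
    have hdelS : IsBDH (delVert (inducedF H S) ⟨w, hiBS hwvB⟩) :=
      IsBDH.iso _ _ hSd (indErase H S w (hiBS hwvB)).symm
    exact IsBDH.iso _ _ (IsBDH.pendant _ _ hdelS) (isoPendantDel hpS)
  · -- twin case
    have htB : t ∈ B := by
      rcases Finset.mem_insert.mp htvB with rfl | h
      · exact absurd (Subtype.ext rfl) htv
      · exact h
    have htwne : t ≠ w := fun he => htw.1 (Subtype.ext he.symm)
    have hclw := hclB w hwB
    have hclt := hclB t htB
    have htwS : IsTwinOf (inducedF H S) ⟨w, hiBS hwvB⟩ ⟨t, hiBS htvB⟩ :=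
      twin_up hiBS hwvB htvB hclw hclt htw
    have hBe : (B.erase w).Nonempty := ⟨t, Finset.mem_erase.mpr ⟨htwne, htB⟩⟩
    have hdel2 : IsBDH (inducedF H ((insert v B).erase w)) :=
      IsBDH.iso _ _ (isBDH_del h2 ⟨w, hwvB⟩ (Or.inr ⟨⟨t, htvB⟩, htw⟩))
        (indErase H (insert v B) w hwvB)
    have hSd : IsBDH (inducedF H (S.erase w)) := by
      refine (ih (S.erase w) hcard' A (B.erase w) hA hBe
        (hdisj.mono_right (Finset.erase_subset _ _)) hpart' hvSw hsep').mpr ⟨h1, ?_⟩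
      rw [hset]
      exact hdel2
    have hdelS : IsBDH (delVert (inducedF H S) ⟨w, hiBS hwvB⟩) :=
      IsBDH.iso _ _ hSd (indErase H S w (hiBS hwvB)).symm
    -- non-isolation of t after deleting w
    obtain ⟨x0', hx0⟩ := exists_nbr (conn_of_isBDH h2)
      (show (⟨w, hwvB⟩ : {x // x ∈ insert v B}) ≠ ⟨v, Finset.mem_insert_self v B⟩ from hw'v)
    have hadjw : H.Adj w ↑x0' := hx0
    have hadjt : H.Adj t ↑x0' := (htw.2 x0').mp hx0
    have hx0w : (↑x0' : V') ≠ w := fun he => hadjw.ne he.symm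
    refine IsBDH.iso _ _ (IsBDH.falseTwin (delVert (inducedF H S) ⟨w, hiBS hwvB⟩)
      ⟨⟨t, hiBS htvB⟩, Ne.symm htwS.1⟩
      ⟨⟨⟨↑x0', hiBS x0'.2⟩, fun he => hx0w (congrArg Subtype.val he)⟩, hadjt⟩ hdelS)
      (isoTwinDel htwS)
end Aux6

section Aux7
variable {V' : Type u} [DecidableEq V']

/-- Forward step: from a good removable vertex in `B`, split off both pieces. -/
lemma keyF (H : SimpleGraph V') (S : Finset V') (v : V')
    (ih : ∀ S' : Finset V', S'.card < S.card → ∀ (A B : Finset V'),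
      A.Nonempty → B.Nonempty → Disjoint A B → A ∪ B = S'.erase v → v ∈ S' →
      (∀ a ∈ A, ∀ b ∈ B, ¬ H.Adj a b) →
      (IsBDH (inducedF H S') ↔
        IsBDH (inducedF H (insert v A)) ∧ IsBDH (inducedF H (insert v B))))
    (hvS : v ∈ S) (A B : Finset V') (hA : A.Nonempty) (hB : B.Nonempty)
    (hdisj : Disjoint A B) (hpart : A ∪ B = S.erase v)
    (hsep : ∀ a ∈ A, ∀ b ∈ B, ¬ H.Adj a b)
    (hH : IsBDH (inducedF H S)) (w : V') (hwS : w ∈ S) (hwB : w ∈ B)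
    (hstr : (∃ z', IsPendantAt (inducedF H S) ⟨w, hwS⟩ z') ∨
      (∃ t' : {x // x ∈ S}, (↑t' : V') ≠ v ∧ IsTwinOf (inducedF H S) ⟨w, hwS⟩ t')) :
    IsBDH (inducedF H (insert v A)) ∧ IsBDH (inducedF H (insert v B)) := by
  classical
  have hvB : v ∉ B := by
    intro h
    have : v ∈ S.erase v := hpart ▸ Finset.mem_union_right A h
    exact (Finset.mem_erase.mp this).1 rfl
  have hvA : v ∉ A := by
    intro h
    have : v ∈ S.erase v := hpart ▸ Finset.mem_union_left B h
    exact (Finset.mem_erase.mp this).1 rfl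
  have hBS : B ⊆ S := fun b hb =>
    Finset.mem_of_mem_erase (hpart ▸ Finset.mem_union_right A hb)
  have hAS : A ⊆ S := fun a ha =>
    Finset.mem_of_mem_erase (hpart ▸ Finset.mem_union_left B ha)
  have hiBS : insert v B ⊆ S := Finset.insert_subset_iff.mpr ⟨hvS, hBS⟩
  have hABmem : ∀ x ∈ S, x = v ∨ x ∈ A ∨ x ∈ B := by
    intro x hx
    by_cases hxv : x = v
    · exact Or.inl hxv
    · have : x ∈ A ∪ B := hpart ▸ Finset.mem_erase.mpr ⟨hxv, hx⟩
      exact Or.inr (Finset.mem_union.mp this)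
  have hclB : ∀ u ∈ B, ∀ x ∈ S, H.Adj u x → x ∈ insert v B := by
    intro u hu x hx hadj
    rcases hABmem x hx with rfl | hxA | hxB
    · exact Finset.mem_insert_self _ _
    · exact absurd hadj.symm (hsep x hxA u hu)
    · exact Finset.mem_insert_of_mem hxB
  have hclA : ∀ u ∈ A, ∀ x ∈ S, H.Adj u x → x ∈ insert v A := by
    intro u hu x hx hadj
    rcases hABmem x hx with rfl | hxA | hxB
    · exact Finset.mem_insert_self _ _
    · exact Finset.mem_insert_of_mem hxA
    · exact absurd hadj (hsep u hu x hxB)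
  have hvw : v ≠ w := fun he => hvB (he ▸ hwB)
  have hwvB : w ∈ insert v B := Finset.mem_insert_of_mem hwB
  have hcard' : (S.erase w).card < S.card := Finset.card_erase_lt_of_mem hwS
  have hpart' : A ∪ B.erase w = (S.erase w).erase v := by
    ext x
    simp only [Finset.mem_union, Finset.mem_erase]
    constructor
    · rintro (hxA | ⟨hxw, hxB⟩)
      · have hx : x ∈ S.erase v := hpart ▸ Finset.mem_union_left B hxA
        exact ⟨(Finset.mem_erase.mp hx).1,
          fun he => Finset.disjoint_left.mp hdisj hxA (he ▸ hwB), (Finset.mem_erase.mp hx).2⟩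
      · have hx : x ∈ S.erase v := hpart ▸ Finset.mem_union_right A hxB
        exact ⟨(Finset.mem_erase.mp hx).1, hxw, (Finset.mem_erase.mp hx).2⟩
    · rintro ⟨hxv, hxw, hxS⟩
      rcases hABmem x hxS with rfl | hxA | hxB
      · exact absurd rfl hxv
      · exact Or.inl hxA
      · exact Or.inr ⟨hxw, hxB⟩
  have hvSw : v ∈ S.erase w := Finset.mem_erase.mpr ⟨hvw, hvS⟩
  have hsep' : ∀ a ∈ A, ∀ b ∈ B.erase w, ¬ H.Adj a b := fun a ha b hb =>
    hsep a ha b (Finset.mem_of_mem_erase hb)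
  have hset : insert v (B.erase w) = (insert v B).erase w := by
    ext x
    simp only [Finset.mem_insert, Finset.mem_erase]
    constructor
    · rintro (rfl | ⟨hxw, hxB⟩)
      · exact ⟨hvw, Or.inl rfl⟩
      · exact ⟨hxw, Or.inr hxB⟩
    · rintro ⟨hxw, (rfl | hxB)⟩
      · exact Or.inl rfl
      · exact Or.inr ⟨hxw, hxB⟩
  -- convert the structure so the partner is on the `B` side (or the pendant case)
  have hstr' : (∃ z' : {x // x ∈ S}, IsPendantAt (inducedF H S) ⟨w, hwS⟩ z' ∧
        (↑z' : V') ∈ insert v B) ∨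
      (∃ t' : {x // x ∈ S}, IsTwinOf (inducedF H S) ⟨w, hwS⟩ t' ∧ (↑t' : V') ∈ B) := by
    rcases hstr with ⟨z', hp⟩ | ⟨t', htv, htw⟩
    · exact Or.inl ⟨z', hp, hclB w hwB ↑z' z'.2 hp.adj⟩
    · rcases hABmem ↑t' t'.2 with hv' | htA | htB
      · exact absurd hv' htv
      · have hNwv : ∀ x : {x // x ∈ S}, (inducedF H S).Adj ⟨w, hwS⟩ x → (↑x : V') = v := by
          intro x hx
          have h1 : ↑x ∈ insert v B := hclB w hwB ↑x x.2 hx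
          have h2 : ↑x ∈ insert v A := hclA ↑t' htA ↑x x.2 ((htw.2 x).mp hx)
          rcases Finset.mem_insert.mp h1 with h | h
          · exact h
          rcases Finset.mem_insert.mp h2 with h' | h'
          · exact h'
          · exact absurd h (Finset.disjoint_left.mp hdisj h')
        obtain ⟨x1, hx1⟩ := exists_nbr (conn_of_isBDH hH)
          (show (⟨w, hwS⟩ : {x // x ∈ S}) ≠ ⟨v, hvS⟩ from
            fun he => hvw (congrArg Subtype.val he).symm)
        have hx1e : x1 = ⟨v, hvS⟩ := Subtype.ext (hNwv x1 hx1)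
        have hpv : IsPendantAt (inducedF H S) ⟨w, hwS⟩ ⟨v, hvS⟩ := by
          intro x
          constructor
          · intro hx
            exact Subtype.ext (hNwv x hx)
          · rintro rfl
            exact hx1e ▸ hx1
        exact Or.inl ⟨⟨v, hvS⟩, hpv, Finset.mem_insert_self _ _⟩
      · exact Or.inr ⟨t', htw, htB⟩
  rcases hstr' with ⟨⟨z, hzS⟩, hp, hzvB⟩ | ⟨⟨t, htS⟩, htw, htB⟩
  · -- pendant case
    have hSd : IsBDH (inducedF H (S.erase w)) :=
      IsBDH.iso _ _ (isBDH_del hH ⟨w, hwS⟩ (Or.inl ⟨⟨z, hzS⟩, hp⟩)) (indErase H S w hwS)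
    have hp2 : IsPendantAt (inducedF H (insert v B)) ⟨w, hwvB⟩ ⟨z, hzvB⟩ :=
      pendant_down hiBS hwvB hzvB hp
    by_cases hBe : (B.erase w).Nonempty
    · have recur := (ih (S.erase w) hcard' A (B.erase w) hA hBe
        (hdisj.mono_right (Finset.erase_subset _ _)) hpart' hvSw hsep').mp hSd
      refine ⟨recur.1, ?_⟩
      have hdel2 : IsBDH (delVert (inducedF H (insert v B)) ⟨w, hwvB⟩) := by
        have h' := recur.2
        rw [hset] at h'
        exact IsBDH.iso _ _ h' (indErase H (insert v B) w hwvB).symm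
      exact IsBDH.iso _ _ (IsBDH.pendant _ _ hdel2) (isoPendantDel hp2)
    · have hBw : B = {w} := by
        apply Finset.eq_singleton_iff_unique_mem.mpr
        refine ⟨hwB, fun x hx => ?_⟩
        by_contra hne
        exact hBe ⟨x, Finset.mem_erase.mpr ⟨hne, hx⟩⟩
      have hSeq : S.erase w = insert v A := by
        ext x
        simp only [Finset.mem_erase, Finset.mem_insert]
        constructor
        · rintro ⟨hxw, hxS⟩
          rcases hABmem x hxS with rfl | hxA | hxB
          · exact Or.inl rfl
          · exact Or.inr hxA
          · rw [hBw, Finset.mem_singleton] at hxB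
            exact absurd hxB hxw
        · rintro (rfl | hxA)
          · exact ⟨hvw, hvS⟩
          · exact ⟨fun he => Finset.disjoint_left.mp hdisj hxA (he ▸ hwB), hAS hxA⟩
      rw [hSeq] at hSd
      refine ⟨hSd, ?_⟩
      have hsingle : IsBDH (delVert (inducedF H (insert v B)) ⟨w, hwvB⟩) := by
        refine isBDH_of_subsingleton _
          ⟨⟨v, Finset.mem_insert_self v B⟩, fun he => hvw (congrArg Subtype.val he)⟩ ?_
        rintro ⟨⟨x, hxvB⟩, hne⟩
        rcases Finset.mem_insert.mp hxvB with rfl | hxB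
        · exact Subtype.ext (Subtype.ext rfl)
        · rw [hBw, Finset.mem_singleton] at hxB
          exact absurd (Subtype.ext hxB) hne
      exact IsBDH.iso _ _ (IsBDH.pendant _ _ hsingle) (isoPendantDel hp2)
  · -- twin case
    have htwne : t ≠ w := fun he => htw.1 (Subtype.ext he.symm)
    have htvB : t ∈ insert v B := Finset.mem_insert_of_mem htB
    have hBe : (B.erase w).Nonempty := ⟨t, Finset.mem_erase.mpr ⟨htwne, htB⟩⟩
    have hSd : IsBDH (inducedF H (S.erase w)) :=
      IsBDH.iso _ _ (isBDH_del hH ⟨w, hwS⟩ (Or.inr ⟨⟨t, htS⟩, htw⟩)) (indErase H S w hwS)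
    have recur := (ih (S.erase w) hcard' A (B.erase w) hA hBe
      (hdisj.mono_right (Finset.erase_subset _ _)) hpart' hvSw hsep').mp hSd
    refine ⟨recur.1, ?_⟩
    have htw2 : IsTwinOf (inducedF H (insert v B)) ⟨w, hwvB⟩ ⟨t, htvB⟩ :=
      twin_down hiBS hwvB htvB htw
    have hdel2 : IsBDH (delVert (inducedF H (insert v B)) ⟨w, hwvB⟩) := by
      have h' := recur.2
      rw [hset] at h'
      exact IsBDH.iso _ _ h' (indErase H (insert v B) w hwvB).symm
    obtain ⟨x0, hx0⟩ := exists_nbr (conn_of_isBDH hH)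
      (show (⟨w, hwS⟩ : {x // x ∈ S}) ≠ ⟨v, hvS⟩ from
        fun he => hvw (congrArg Subtype.val he).symm)
    have hadjw : H.Adj w ↑x0 := hx0
    have hadjt : H.Adj t ↑x0 := (htw.2 x0).mp hx0
    have hx0vB : (↑x0 : V') ∈ insert v B := hclB w hwB ↑x0 x0.2 hx0
    have hx0w : (↑x0 : V') ≠ w := fun he => hadjw.ne he.symm
    exact IsBDH.iso _ _ (IsBDH.falseTwin (delVert (inducedF H (insert v B)) ⟨w, hwvB⟩)
      ⟨⟨t, htvB⟩, Ne.symm htw2.1⟩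
      ⟨⟨⟨↑x0, hx0vB⟩, fun he => hx0w (congrArg Subtype.val he)⟩, hadjt⟩ hdel2)
      (isoTwinDel htw2)
end Aux7

section Aux8
variable {V' : Type u} [DecidableEq V']

theorem master (H : SimpleGraph V') :
    ∀ (n : ℕ) (S : Finset V'), S.card = n → ∀ (v : V') (A B : Finset V'),
    A.Nonempty → B.Nonempty → Disjoint A B → A ∪ B = S.erase v → v ∈ S →
    (∀ a ∈ A, ∀ b ∈ B, ¬ H.Adj a b) →
    (IsBDH (inducedF H S) ↔
      IsBDH (inducedF H (insert v A)) ∧ IsBDH (inducedF H (insert v B))) := by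
  intro n
  induction n using Nat.strong_induction_on with
  | _ n IHn =>
  intro S hS v A B hA hB hdisj hpart hvS hsep
  have ih : ∀ S' : Finset V', S'.card < S.card → ∀ (A B : Finset V'),
      A.Nonempty → B.Nonempty → Disjoint A B → A ∪ B = S'.erase v → v ∈ S' →
      (∀ a ∈ A, ∀ b ∈ B, ¬ H.Adj a b) →
      (IsBDH (inducedF H S') ↔
        IsBDH (inducedF H (insert v A)) ∧ IsBDH (inducedF H (insert v B))) := by
    intro S' hlt A' B' hA' hB' hd hp hv hs
    rw [hS] at hlt
    exact IHn S'.card hlt S' rfl v A' B' hA' hB' hd hp hv hs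
  have hvB : v ∉ B := by
    intro h
    have : v ∈ S.erase v := hpart ▸ Finset.mem_union_right A h
    exact (Finset.mem_erase.mp this).1 rfl
  have hvA : v ∉ A := by
    intro h
    have : v ∈ S.erase v := hpart ▸ Finset.mem_union_left B h
    exact (Finset.mem_erase.mp this).1 rfl
  have hBS : B ⊆ S := fun b hb =>
    Finset.mem_of_mem_erase (hpart ▸ Finset.mem_union_right A hb)
  have hAS : A ⊆ S := fun a ha =>
    Finset.mem_of_mem_erase (hpart ▸ Finset.mem_union_left B ha)
  have hABmem : ∀ x ∈ S, x = v ∨ x ∈ A ∨ x ∈ B := by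
    intro x hx
    by_cases hxv : x = v
    · exact Or.inl hxv
    · have : x ∈ A ∪ B := hpart ▸ Finset.mem_erase.mpr ⟨hxv, hx⟩
      exact Or.inr (Finset.mem_union.mp this)
  constructor
  · intro hH
    obtain ⟨a0, ha0⟩ := hA
    have hva0 : v ≠ a0 := fun he => hvA (he ▸ ha0)
    obtain ⟨⟨w, hwS⟩, hw'v, hcases⟩ := avoid hH ⟨v, hvS⟩ ⟨a0, hAS ha0⟩
      (fun he => hva0 (congrArg Subtype.val he)) ⟨v, hvS⟩
    have hwv : w ≠ v := fun he => hw'v (Subtype.ext he)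
    have hconn := conn_of_isBDH hH
    have hstr : (∃ z', IsPendantAt (inducedF H S) ⟨w, hwS⟩ z') ∨
        (∃ t' : {x // x ∈ S}, (↑t' : V') ≠ v ∧ IsTwinOf (inducedF H S) ⟨w, hwS⟩ t') := by
      rcases hcases with ⟨z, _, hp⟩ | ⟨t, htv, htw⟩ | ⟨_, hp2⟩
      · exact Or.inl ⟨z, hp⟩
      · exact Or.inr ⟨t, fun he => htv (Subtype.ext he), htw⟩
      · exfalso
        have cut : ∀ (X Y : Finset V'), Disjoint X Y → X ∪ Y = S.erase v →
            (∀ c ∈ X, ∀ d ∈ Y, ¬ H.Adj c d) → w ∈ Y → X.Nonempty → False := by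
          intro X Y hXY hXYpart hXYsep hwY hXne
          obtain ⟨c0, hc0⟩ := hXne
          have hXS : X ⊆ S := fun c hc =>
            Finset.mem_of_mem_erase (hXYpart ▸ Finset.mem_union_left _ hc)
          have hXv : v ∉ X := fun h =>
            (Finset.mem_erase.mp (hXYpart ▸ Finset.mem_union_left _ h)).1 rfl
          have hXYmem : ∀ x ∈ S, x = v ∨ x ∈ X ∨ x ∈ Y := by
            intro x hx
            by_cases hxv : x = v
            · exact Or.inl hxv
            · have : x ∈ X ∪ Y := hXYpart ▸ Finset.mem_erase.mpr ⟨hxv, hx⟩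
              exact Or.inr (Finset.mem_union.mp this)
          have hcl : ∀ x ∈ {x : {x // x ∈ S} | (↑x : V') ∈ X}, ∀ y,
              (inducedF H S).Adj x y → y ∈ {x : {x // x ∈ S} | (↑x : V') ∈ X} := by
            intro x hx y hadj
            rcases hXYmem ↑y y.2 with hyv | hyX | hyY
            · exfalso
              have hy : y = ⟨v, hvS⟩ := Subtype.ext hyv
              have hxw : x = ⟨w, hwS⟩ := (hp2 x).mp (hy ▸ hadj.symm)
              have hval : (↑x : V') = w := congrArg Subtype.val hxw
              have hwX : w ∈ X := hval ▸ hx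
              exact Finset.disjoint_left.mp hXY hwX hwY
            · exact hyX
            · exact absurd hadj (hXYsep ↑x hx ↑y hyY)
          obtain ⟨p⟩ := hconn.preconnected ⟨c0, hXS hc0⟩ ⟨v, hvS⟩
          have hvX : v ∈ X := reach_closed hcl hc0 p
          exact hXv hvX
        rcases hABmem w hwS with he | hwA | hwB
        · exact hwv he
        · exact cut B A hdisj.symm (by rw [Finset.union_comm]; exact hpart)
            (fun b hb a ha hadj => hsep a ha b hb hadj.symm) hwA hB
        · exact cut A B hdisj hpart hsep hwB ⟨a0, ha0⟩
    rcases hABmem w hwS with he | hwA | hwB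
    · exact absurd he hwv
    · have res := keyF H S v ih hvS B A hB ⟨a0, ha0⟩ hdisj.symm
        (by rw [Finset.union_comm]; exact hpart)
        (fun b hb a ha hadj => hsep a ha b hb hadj.symm) hH w hwS hwA hstr
      exact ⟨res.2, res.1⟩
    · exact keyF H S v ih hvS A B ⟨a0, ha0⟩ hB hdisj hpart hsep hH w hwS hwB hstr
  · rintro ⟨h1, h2⟩
    exact keyB H S v ih hvS A B hA hB hdisj hpart hsep h1 h2
end Aux8

theorem isBDH_onePointJoin' {V : Type u} [Fintype V] [DecidableEq V]
    (H : SimpleGraph V) (v : V) (A B : Finset V)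
    (hAne : A.Nonempty) (hBne : B.Nonempty)
    (hdisj : Disjoint A B) (hpart : A ∪ B = Finset.univ.erase v)
    (hsep : ∀ a ∈ A, ∀ b ∈ B, ¬ H.Adj a b) :
    IsBDH H ↔ IsBDH (inducedF H (insert v A)) ∧ IsBDH (inducedF H (insert v B)) := by
  have hm := master H Finset.univ.card Finset.univ rfl v A B hAne hBne hdisj hpart
    (Finset.mem_univ v) hsep
  constructor
  · intro h
    exact hm.mp (IsBDH.iso _ _ h (indUniv H).symm)
  · intro h
    exact IsBDH.iso _ _ (hm.mpr h) (indUniv H)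


/-- A one point join is a BDH graph if and only if both pieces are: if the vertices of `H`
other than `v` split into two nonempty parts `A`, `B` with no edges between them, then `H`
is BDH iff `H[A ∪ {v}]` and `H[B ∪ {v}]` are both BDH. -/
theorem isBDH_onePointJoin {V : Type u} [Fintype V] [DecidableEq V]
    (H : SimpleGraph V) (v : V) (A B : Finset V)
    (hAne : A.Nonempty) (hBne : B.Nonempty)
    (hdisj : Disjoint A B) (hpart : A ∪ B = Finset.univ.erase v)
    (hsep : ∀ a ∈ A, ∀ b ∈ B, ¬ H.Adj a b) :
    IsBDH H ↔ IsBDH (inducedF H (insert v A)) ∧ IsBDH (inducedF H (insert v B)) := by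
  exact isBDH_onePointJoin' H v A B hAne hBne hdisj hpart hsep
end
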